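/- arXiv:2508.05159 — 11 statements merged into one kernel-verified Lean document; each statement's English description precedes it below -/
import Mathlib

section
/- A finite sequence S = (u_0, ..., u_{n-1}) of elements of ℤ/mℤ is antisymmetric (i.e., u_{n-1-j} = -u_j for all j ∈ {0,...,n-1}) if and only if its derived sequence ∂S = (-u_j - u_{j+1})_{j=0}^{n-2} is antisymmetric, the doubled sum 2·σ(S) = 0, and the sum σ(∂S) = 0, where σ denotes the sum of the elements of a finite sequence. -/
/-- A finite sequence `u_0, …, u_{n-1}` in `ℤ/mℤ` is antisymmetric
(`u_{n-1-j} = -u_j` for all `j < n`) iff its derived sequence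
`∂S = (-u_j - u_{j+1})_{j=0}^{n-2}` is antisymmetric, `2·σ(S) = 0` and `σ(∂S) = 0`. -/
theorem antisymmetric_iff_derived (m n : ℕ) (hm : 0 < m) (hn : 2 ≤ n) (u : ℕ → ZMod m) :
    (∀ j < n, u (n - 1 - j) = -u j) ↔
      ((∀ j < n - 1, -u (n - 2 - j) - u (n - 2 - j + 1) = -(-u j - u (j + 1))) ∧
        2 * ∑ j ∈ Finset.range n, u j = 0 ∧
        ∑ j ∈ Finset.range (n - 1), (-u j - u (j + 1)) = 0) := by
  obtain ⟨k, rfl⟩ : ∃ k, n = k + 2 := ⟨n - 2, by omega⟩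
  have hsum : ∑ j ∈ Finset.range (k + 2 - 1), (-u j - u (j + 1)) =
      -(2 * ∑ j ∈ Finset.range (k + 2), u j) + (u 0 + u (k + 1)) := by
    have e1 : ∑ j ∈ Finset.range (k + 1), u (j + 1) =
        (∑ j ∈ Finset.range (k + 2), u j) - u 0 := by
      rw [Finset.sum_range_succ' u (k + 1)]; ring
    have e2 : ∑ j ∈ Finset.range (k + 1), u j =
        (∑ j ∈ Finset.range (k + 2), u j) - u (k + 1) := by
      rw [Finset.sum_range_succ u (k + 1)]; ring
    have e3 : ∀ j, -u j - u (j + 1) = -u j + -u (j + 1) := fun j => by ring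
    calc ∑ j ∈ Finset.range (k + 2 - 1), (-u j - u (j + 1))
        = ∑ j ∈ Finset.range (k + 1), (-u j + -u (j + 1)) := by
          refine Finset.sum_congr rfl fun j _ => e3 j
      _ = (∑ j ∈ Finset.range (k + 1), -u j) + ∑ j ∈ Finset.range (k + 1), -u (j + 1) :=
          Finset.sum_add_distrib
      _ = -(∑ j ∈ Finset.range (k + 1), u j) + -(∑ j ∈ Finset.range (k + 1), u (j + 1)) := by
          rw [Finset.sum_neg_distrib, Finset.sum_neg_distrib]
      _ = -(2 * ∑ j ∈ Finset.range (k + 2), u j) + (u 0 + u (k + 1)) := by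
          rw [e1, e2]; ring
  constructor
  · intro h
    have hσ : 2 * ∑ j ∈ Finset.range (k + 2), u j = 0 := by
      have hrefl : ∑ j ∈ Finset.range (k + 2), u j = -∑ j ∈ Finset.range (k + 2), u j := by
        rw [← Finset.sum_neg_distrib, ← Finset.sum_range_reflect u (k + 2)]
        exact Finset.sum_congr rfl fun j hj => h j (Finset.mem_range.mp hj)
      linear_combination hrefl
    refine ⟨?_, hσ, ?_⟩
    · intro j hj
      have h1 : u (k + 1 - j) = -u j := by
        rw [show k + 1 - j = k + 2 - 1 - j from by omega]; exact h j (by omega)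
      have h2 : u (k - j) = -u (j + 1) := by
        rw [show k - j = k + 2 - 1 - (j + 1) from by omega]; exact h (j + 1) (by omega)
      rw [show k + 2 - 2 - j = k - j from by omega, show k - j + 1 = k + 1 - j from by omega,
        h1, h2]
      ring
    · have h0 : u (k + 1) = -u 0 := by
        rw [show k + 1 = k + 2 - 1 - 0 from by omega]; exact h 0 (by omega)
      rw [hsum, hσ, h0]; ring
  · rintro ⟨h1, h2, h3⟩
    rw [hsum, h2] at h3
    have key : ∀ j, j < k + 2 → u (k + 1 - j) = -u j := by
      intro j
      induction j with
      | zero => intro _; simpa using by linear_combination h3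
      | succ j ih =>
        intro hj
        have hij := ih (by omega)
        have hd := h1 j (by omega)
        rw [show k + 2 - 2 - j = k - j from by omega,
          show k - j + 1 = k + 1 - j from by omega] at hd
        rw [show k + 1 - (j + 1) = k - j from by omega]
        linear_combination -hd - hij
    intro j hj
    exact key j hj
end

section
/- Let S be a k-interlaced arithmetic progression in ℤ/mℤ. If S is p-periodic, then S is a gcd(k,p)-interlaced arithmetic progression, i.e., there exist gcd(k,p)-tuples A' and D' such that u_{q·gcd(k,p)+r} = a'_r + q·d'_r for all integers q and r ∈ {0,...,gcd(k,p)-1}. -/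
/-- `u : ℤ → ZMod m` is a `k`-interlaced arithmetic progression: there exist
`k`-tuples `a`, `d` with `u (qk + r) = a_r + q·d_r` for all `q ∈ ℤ`, `r ∈ {0,…,k-1}`. -/
def IsIAP (m k : ℕ) (u : ℤ → ZMod m) : Prop :=
  ∃ a d : ℕ → ZMod m, ∀ (q : ℤ) (r : ℕ), r < k →
    u (q * k + r) = a r + (q : ZMod m) * d r

lemma shift_int {α : Type*} (f : ℤ → α) (c : ℤ) (h : ∀ j, f (j + c) = f j) :
    ∀ (j n : ℤ), f (j + n * c) = f j := by
  intro j n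
  induction n using Int.induction_on with
  | zero => simp
  | succ n ih => rw [show j + ((n:ℤ)+1)*c = (j + n*c) + c by ring, h, ih]
  | pred n ih =>
      have h1 := h (j + (-(n:ℤ)-1)*c)
      rw [show j + (-(n:ℤ)-1)*c + c = j + (-(n:ℤ))*c by ring, ih] at h1
      exact h1.symm

/-- If a `k`-interlaced arithmetic progression over `ℤ/mℤ` is `p`-periodic,
then it is a `gcd(k,p)`-interlaced arithmetic progression. -/
theorem iap_periodic_gcd (m k p : ℕ) (hm : 0 < m) (hk : 0 < k) (hp : 0 < p)
    (u : ℤ → ZMod m) (hu : IsIAP m k u) (hper : ∀ j : ℤ, u (j + p) = u j) :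
    IsIAP m (Nat.gcd k p) u := by
  obtain ⟨a, d, h⟩ := hu
  set g : ℕ := Nat.gcd k p with hg
  set D : ℤ → ZMod m := fun j => u (j + k) - u j with hDdef
  have hk' : (0:ℤ) < k := by exact_mod_cast hk
  have huk : ∀ j : ℤ, u (j + k) = u j + D j := by
    intro j; simp only [hDdef]; ring
  have hDk : ∀ j : ℤ, D (j + k) = D j := by
    intro j
    have hr : (j % k).toNat < k := by
      have h1 := Int.emod_lt_of_pos j hk'
      have h0 := Int.emod_nonneg j hk'.ne'
      omega
    have hj : j = (j / k) * k + (((j % k).toNat : ℕ) : ℤ) := by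
      have h0 := Int.emod_nonneg j hk'.ne'
      rw [Int.toNat_of_nonneg h0, mul_comm]
      exact (Int.mul_ediv_add_emod j k).symm
    set q := j / k with hq
    set r := (j % k).toNat with hrdef
    have e0 := h q r hr
    have e1 := h (q+1) r hr
    have e2 := h (q+2) r hr
    simp only [hDdef]
    rw [show j + (k:ℤ) + k = (q+2)*k + r by rw [hj]; push_cast; ring,
        show j + (k:ℤ) = (q+1)*k + r by rw [hj]; push_cast; ring,
        e1, e2]
    rw [hj, e0]
    push_cast
    ring
  have hDp : ∀ j : ℤ, D (j + p) = D j := by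
    intro j
    simp only [hDdef]
    rw [show j + (p:ℤ) + k = (j + k) + p by ring, hper (j + k), hper j]
  have hDkZ := shift_int D k hDk
  have hDpZ := shift_int D p hDp
  have hperZ := shift_int u p hper
  have hukZ : ∀ (j n : ℤ), u (j + n * k) = u j + (n : ZMod m) * D j := by
    intro j n
    induction n using Int.induction_on with
    | zero => simp
    | succ n ih =>
        rw [show j + ((n:ℤ)+1)*k = (j + n*k) + k by ring, huk, ih, hDkZ]
        push_cast; ring
    | pred n ih =>
        have h1 := huk (j + (-(n:ℤ)-1)*k)
        rw [show j + (-(n:ℤ)-1)*k + k = j + (-(n:ℤ))*k by ring, ih, hDkZ] at h1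
        push_cast at h1 ⊢
        linear_combination -h1
  have hbez : (g : ℤ) = k * Nat.gcdA k p + p * Nat.gcdB k p := Nat.gcd_eq_gcd_ab k p
  have hug : ∀ j : ℤ, u (j + g) = u j + ((Nat.gcdA k p : ℤ) : ZMod m) * D j := by
    intro j
    rw [show j + (g:ℤ) = (j + Nat.gcdB k p * p) + Nat.gcdA k p * k by rw [hbez]; ring,
        hukZ, hperZ, hDpZ]
  have hDg : ∀ j : ℤ, D (j + g) = D j := by
    intro j
    rw [show j + (g:ℤ) = (j + Nat.gcdB k p * p) + Nat.gcdA k p * k by rw [hbez]; ring,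
        hDkZ, hDpZ]
  have hDgZ := shift_int D g hDg
  refine ⟨fun r => u r, fun r => ((Nat.gcdA k p : ℤ) : ZMod m) * D r, ?_⟩
  intro q r hr
  induction q using Int.induction_on with
  | zero => simp
  | succ q ih =>
      have hD' : D ((q:ℤ)*g + r) = D r := by
        rw [show (q:ℤ)*(g:ℤ) + (r:ℤ) = (r:ℤ) + (q:ℤ)*(g:ℤ) by ring]
        exact hDgZ r q
      rw [show ((q:ℤ)+1)*g + r = ((q:ℤ)*g + r) + g by ring, hug, ih, hD']
      push_cast; ring
  | pred q ih =>
      have hD' : D ((-(q:ℤ)-1)*g + r) = D r := by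
        rw [show (-(q:ℤ)-1)*(g:ℤ) + (r:ℤ) = (r:ℤ) + (-(q:ℤ)-1)*(g:ℤ) by ring]
        exact hDgZ r _
      have h1 := hug ((-(q:ℤ)-1)*g + r)
      rw [show (-(q:ℤ)-1)*g + r + g = (-(q:ℤ))*g + r by ring, ih, hD'] at h1
      push_cast at h1 ⊢
      linear_combination -h1
end

section
/- The derived sequence of an interlaced arithmetic progression IAP((a_0,...,a_{k-1}),(d_0,...,d_{k-1})) over ℤ/mℤ equals the interlaced arithmetic progression IAP(-(a_0+a_1, a_1+a_2, ..., a_{k-2}+a_{k-1}, a_{k-1}+a_0+d_0), -(d_0+d_1, ..., d_{k-2}+d_{k-1}, d_{k-1}+d_0)). -/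
/-- The `k`-interlaced arithmetic progression `IAP(A,D)` over `ℤ/mℤ`:
`u (qk + r) = a_r + q·d_r` for `q ∈ ℤ` and `r ∈ {0,…,k-1}`. -/
def iapSeq (m k : ℕ) (a d : ℕ → ZMod m) : ℤ → ZMod m :=
  fun j => a (j % (k : ℤ)).toNat + ((j / (k : ℤ) : ℤ) : ZMod m) * d (j % (k : ℤ)).toNat

/-- The derived sequence of `IAP((a_0,…,a_{k-1}),(d_0,…,d_{k-1}))` is
`IAP(-(a_0+a_1,…,a_{k-2}+a_{k-1},a_{k-1}+a_0+d_0), -(d_0+d_1,…,d_{k-2}+d_{k-1},d_{k-1}+d_0))`. -/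
theorem derived_iap (m k : ℕ) (hm : 0 < m) (hk : 0 < k) (a d : ℕ → ZMod m) :
    ∀ j : ℤ,
      -(iapSeq m k a d j) - iapSeq m k a d (j + 1) =
        iapSeq m k
          (fun r => if r + 1 < k then -(a r + a (r + 1)) else -(a (k - 1) + a 0 + d 0))
          (fun r => if r + 1 < k then -(d r + d (r + 1)) else -(d (k - 1) + d 0)) j := by
  intro j
  have hk' : (0:ℤ) < (k:ℤ) := by exact_mod_cast hk
  set r := j % (k:ℤ) with hr
  set q := j / (k:ℤ) with hq
  have hr0 : 0 ≤ r := Int.emod_nonneg j (by omega)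
  have hrk : r < k := Int.emod_lt_of_pos j hk'
  have hj : j = (k:ℤ) * q + r := (Int.mul_ediv_add_emod j k).symm
  by_cases h : r + 1 < (k:ℤ)
  · have hjj : j + 1 = (r+1) + q * k := by rw [hj]; ring
    have h1 : (j+1) % (k:ℤ) = r + 1 := by
      rw [hjj, Int.add_mul_emod_self_right, Int.emod_eq_of_lt (by omega) h]
    have h2 : (j+1) / (k:ℤ) = q := by
      rw [hjj, Int.add_mul_ediv_right _ _ (by omega : (k:ℤ) ≠ 0),
        Int.ediv_eq_zero_of_lt (by omega) h, zero_add]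
    have hnat : (r+1).toNat = r.toNat + 1 := by omega
    have hcond : r.toNat + 1 < k := by omega
    simp only [iapSeq, h1, h2, ← hr, ← hq, hnat, if_pos hcond]
    ring
  · have hjj : j + 1 = (q+1) * k := by
      have hre : r = (k:ℤ) - 1 := by omega
      rw [hj, hre]; ring
    have h1 : (j+1) % (k:ℤ) = 0 := by rw [hjj]; simp [Int.mul_emod_left]
    have h2 : (j+1) / (k:ℤ) = q + 1 := by
      rw [hjj, Int.mul_ediv_cancel _ (by omega : (k:ℤ) ≠ 0)]
    have hnat : r.toNat = k - 1 := by omega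
    have hcond : ¬ (r.toNat + 1 < k) := by omega
    simp only [iapSeq, h1, h2, ← hr, ← hq, hnat]
    rw [if_neg (by omega), if_neg (by omega)]
    push_cast
    ring
end

section
/- Let p and m be positive integers. The binomial coefficients binom(λp+1, 2) are divisible by m for all non-negative integers λ if and only if either m is odd and m divides p, or m is even and 2m divides p. -/
/-- `m ∣ binom(λp+1, 2)` for all `λ ≥ 0` iff (`m` odd and `m ∣ p`) or (`m` even and `2m ∣ p`). -/
theorem triangular_divisibility (p m : ℕ) (hp : 0 < p) (hm : 0 < m) :
    (∀ lam : ℕ, m ∣ Nat.choose (lam * p + 1) 2) ↔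
      ((Odd m ∧ m ∣ p) ∨ (Even m ∧ 2 * m ∣ p)) := by
  have heven : ∀ n : ℕ, 2 ∣ n * (n + 1) := fun n => (Nat.even_mul_succ_self n).two_dvd
  have hiff : ∀ n : ℕ, (m ∣ (n + 1).choose 2) ↔ 2 * m ∣ n * (n + 1) := by
    intro n
    rw [Nat.choose_two_right]
    have h1 : (n + 1) * (n + 1 - 1) = n * (n + 1) := by
      simp [Nat.mul_comm]
    rw [h1, Nat.dvd_div_iff_mul_dvd (heven n)]
  constructor
  · intro h
    have h2 : 2 * m ∣ 2 * p * (2 * p + 1) := (hiff (2 * p)).mp (h 2)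
    have h4 : 2 * m ∣ 4 * p * (4 * p + 1) := by
      have := (hiff (4 * p)).mp (h 4)
      convert this using 2 <;> ring
    -- derive m ∣ p via integers
    have h2' : (2 * m : ℤ) ∣ 2 * p * (2 * p + 1) := by exact_mod_cast h2
    have h4' : (2 * m : ℤ) ∣ 4 * p * (4 * p + 1) := by exact_mod_cast h4
    have h4p : (2 * m : ℤ) ∣ 4 * p := by
      have e : (4 * p : ℤ) = 4 * (2 * p * (2 * p + 1)) - 4 * p * (4 * p + 1) := by ring
      rw [e]; exact dvd_sub (h2'.mul_left 4) h4'
    have h2p : (2 * m : ℤ) ∣ 2 * p := by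
      have e : (2 * p : ℤ) = 2 * p * (2 * p + 1) - p * (4 * p) := by ring
      rw [e]; exact dvd_sub h2' (h4p.mul_left p)
    have hmpZ : (m : ℤ) ∣ p := by
      have := (mul_dvd_mul_iff_left (a := (2 : ℤ)) two_ne_zero).mp h2p
      exact this
    have hmp : m ∣ p := Int.ofNat_dvd.mp (by exact_mod_cast hmpZ)
    rcases Nat.even_or_odd m with hme | hmo
    · -- m even: use λ = 1
      right
      refine ⟨hme, ?_⟩
      obtain ⟨t, ht⟩ := hmp
      have h1 : 2 * m ∣ p * (p + 1) := by
        have := (hiff p).mp (by simpa using h 1)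
        exact this
      rw [ht] at h1
      have h1' : m * 2 ∣ m * (t * (m * t + 1)) := by
        convert h1 using 1 <;> ring
      have h2t : 2 ∣ t * (m * t + 1) := (Nat.mul_dvd_mul_iff_left hm).mp h1'
      have hodd : ¬ 2 ∣ (m * t + 1) := by
        obtain ⟨s, hs⟩ := hme.mul_right t
        omega
      have ht2 : 2 ∣ t := by
        rcases (Nat.Prime.dvd_mul Nat.prime_two).mp h2t with h | h
        · exact h
        · exact absurd h hodd
      obtain ⟨s, hs⟩ := ht2
      exact ⟨s, by rw [ht, hs]; ring⟩
    · exact Or.inl ⟨hmo, hmp⟩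
  · rintro (⟨hmo, hmp⟩ | ⟨hme, hmp⟩) lam
    · rw [hiff (lam * p)]
      refine (Nat.coprime_two_left.mpr hmo).mul_dvd_of_dvd_of_dvd (heven _) ?_
      exact (hmp.trans (dvd_mul_left p lam)).mul_right _
    · rw [hiff (lam * p)]
      exact (hmp.trans (dvd_mul_left p lam)).mul_right _
end

section
/- Let S be a p-periodic sequence over ℤ/mℤ (m ≥ 1) whose orbit under the derivation a_{i,j} = -a_{i-1,j} - a_{i-1,j+1} is (p,p)-periodic, and suppose p is a multiple of m if m is odd, or of 2m if m is even. If the triangles built from the initial segments of lengths λ₁p and λ₂p are both balanced for two distinct positive integers λ₁ ≠ λ₂, then the triangle built from the initial segment of length λp is balanced for every non-negative integer λ. -/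
/-- One step of derivation on doubly infinite sequences over `ℤ/mℤ`. -/
def derZ (m : ℕ) (u : ℤ → ZMod m) : ℤ → ZMod m := fun j => -u j - u (j + 1)

/-- Number of occurrences of `x` in the triangle of size `N` generated from `u`. -/
def triCount (m : ℕ) (u : ℤ → ZMod m) (N : ℕ) (x : ZMod m) : ℕ :=
  ∑ i ∈ Finset.range N, ∑ j ∈ Finset.range (N - i),
    if (derZ m)^[i] u (j : ℤ) = x then 1 else 0

section Aux

variable {m p : ℕ}

lemma per_int (f : ℤ → ZMod m) (hf : ∀ j, f (j + p) = f j) :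
    ∀ (k : ℤ) (j : ℤ), f (j + k * p) = f j := by
  intro k
  induction k using Int.induction_on with
  | zero => simp
  | succ n ih =>
      intro j
      have h : j + (n + 1 : ℤ) * p = (j + p) + n * p := by ring
      rw [h, ih, hf]
  | pred n ih =>
      intro j
      have h : j + (-(n : ℤ) - 1) * p = (j - p) + (-(n : ℤ)) * p := by ring
      have h2 : f (j - p) = f j := by
        have h3 := hf (j - p); rw [sub_add_cancel] at h3; exact h3.symm
      rw [h, ih, h2]

lemma key_cast (hp : 0 < p) (f : ℤ → ZMod m) (hf : ∀ j, f (j + p) = f j) (j : ℤ) :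
    f j = f (((j : ZMod p).val : ℕ) : ℤ) := by
  haveI : NeZero p := ⟨hp.ne'⟩
  have hd : (p : ℤ) ∣ j - ((j : ZMod p).val : ℤ) := by
    rw [← ZMod.intCast_zmod_eq_zero_iff_dvd]
    push_cast
    simp [ZMod.natCast_val, ZMod.cast_id]
  obtain ⟨k, hk⟩ := hd
  have hj : j = (((j : ZMod p).val : ℕ) : ℤ) + k * p := by linarith [hk]
  have := per_int f hf k (((j : ZMod p).val : ℕ) : ℤ)
  rw [← hj] at this
  exact this

lemma sum_range_zmod [NeZero p] (G : ZMod p → ℕ) :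
    ∑ j ∈ Finset.range p, G ((j : ℕ) : ZMod p) = ∑ z : ZMod p, G z := by
  have hp : 0 < p := Nat.pos_of_ne_zero (NeZero.ne p)
  refine Finset.sum_bij (fun a _ => ((a : ℕ) : ZMod p)) (fun a _ => Finset.mem_univ _)
    ?_ ?_ (fun a _ => rfl)
  · intro a ha b hb hab
    have ha' := Finset.mem_range.mp ha
    have hb' := Finset.mem_range.mp hb
    have := congrArg ZMod.val hab
    rwa [ZMod.val_cast_of_lt ha', ZMod.val_cast_of_lt hb'] at this
  · intro b _
    exact ⟨b.val, Finset.mem_range.mpr (ZMod.val_lt b), ZMod.natCast_rightInverse b⟩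

lemma shift_sum (hp : 0 < p) (f : ℤ → ZMod m) (hf : ∀ j, f (j + p) = f j)
    (c : ℤ) (x : ZMod m) :
    (∑ j ∈ Finset.range p, if f (c + (j : ℕ)) = x then 1 else 0)
      = ∑ j ∈ Finset.range p, if f ((j : ℕ) : ℤ) = x then 1 else 0 := by
  haveI : NeZero p := ⟨hp.ne'⟩
  set G : ZMod p → ℕ := fun z => if f ((z.val : ℕ) : ℤ) = x then 1 else 0 with hG
  have h1 : (∑ j ∈ Finset.range p, if f (c + (j : ℕ)) = x then 1 else 0)
      = ∑ j ∈ Finset.range p, G ((c : ZMod p) + ((j : ℕ) : ZMod p)) := by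
    refine Finset.sum_congr rfl (fun j _ => ?_)
    rw [hG]
    simp only
    have hcj : ((c + (j : ℕ) : ℤ) : ZMod p) = (c : ZMod p) + ((j : ℕ) : ZMod p) := by
      push_cast; ring
    rw [key_cast hp f hf (c + (j : ℕ)), hcj]
  have h2 : (∑ j ∈ Finset.range p, if f ((j : ℕ) : ℤ) = x then 1 else 0)
      = ∑ j ∈ Finset.range p, G (((j : ℕ) : ZMod p)) := by
    refine Finset.sum_congr rfl (fun j _ => ?_)
    rw [hG]
    simp only
    have hj : (((j : ℕ) : ℤ) : ZMod p) = ((j : ℕ) : ZMod p) := by push_cast; ring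
    rw [key_cast hp f hf ((j : ℕ) : ℤ), hj]
  rw [h1, h2, sum_range_zmod (fun z => G ((c : ZMod p) + z)), sum_range_zmod G]
  exact Equiv.sum_comp (Equiv.addLeft (c : ZMod p)) G

lemma two_mul_choose_two (n : ℕ) : 2 * n.choose 2 = n * (n - 1) := by
  induction n with
  | zero => simp
  | succ k ih =>
      have h : (k + 1).choose 2 = k.choose 2 + k := by
        rw [Nat.choose_succ_succ, Nat.choose_one_right, Nat.add_comm]
      rw [h, Nat.mul_add, ih]
      cases k with
      | zero => simp
      | succ l => simp only [Nat.succ_sub_one]; ring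

end Aux

/-- If a `p`-periodic sequence has `(p,p)`-periodic orbit, `p` is a multiple of `m`
(`m` odd) or of `2m` (`m` even), and the triangles of sizes `λ₁p` and `λ₂p` are
balanced for two distinct positive `λ₁ ≠ λ₂`, then the triangle of size `λp` is
balanced for every `λ ≥ 0`. -/
theorem balanced_of_two (m p : ℕ) (hm : 0 < m) (hp : 0 < p) (u : ℤ → ZMod m)
    (hrow : ∀ (i : ℕ) (j : ℤ), (derZ m)^[i] u (j + p) = (derZ m)^[i] u j)
    (hcol : ∀ (i : ℕ) (j : ℤ), (derZ m)^[i + p] u j = (derZ m)^[i] u j)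
    (hdiv : (Odd m ∧ m ∣ p) ∨ (Even m ∧ 2 * m ∣ p))
    (lam₁ lam₂ : ℕ) (h1 : 0 < lam₁) (h2 : 0 < lam₂) (hne : lam₁ ≠ lam₂)
    (hb1 : ∀ x y : ZMod m, triCount m u (lam₁ * p) x = triCount m u (lam₁ * p) y)
    (hb2 : ∀ x y : ZMod m, triCount m u (lam₂ * p) x = triCount m u (lam₂ * p) y) :
    ∀ lam : ℕ, ∀ x y : ZMod m, triCount m u (lam * p) x = triCount m u (lam * p) y := by
  -- column periodicity iterated
  have hcol' : ∀ (lam i : ℕ) (j : ℤ), (derZ m)^[i + lam * p] u j = (derZ m)^[i] u j := by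
    intro lam
    induction lam with
    | zero => intro i j; simp
    | succ l ih =>
        intro i j
        have h : i + (l + 1) * p = (i + l * p) + p := by ring
        rw [h, hcol (i + l * p) j]
        exact ih i j
  -- row sums
  set r : ℕ → ZMod m → ℕ := fun i x =>
    ∑ j ∈ Finset.range p, if (derZ m)^[i] u ((j : ℕ) : ℤ) = x then 1 else 0 with hr
  set Q : ZMod m → ℕ := fun x => ∑ i ∈ Finset.range p, r i x with hQ
  have hrper : ∀ (lam i : ℕ) (x : ZMod m), r (i + lam * p) x = r i x := by
    intro lam i x
    simp only [hr]
    refine Finset.sum_congr rfl (fun j _ => ?_)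
    rw [hcol' lam i]
  -- sum of row sums over lam*p rows
  have hQsum : ∀ (lam : ℕ) (x : ZMod m),
      ∑ i ∈ Finset.range (lam * p), r i x = lam * Q x := by
    intro lam x
    induction lam with
    | zero => simp
    | succ l ih =>
        have h : (l + 1) * p = l * p + p := by ring
        rw [h, Finset.sum_range_add, ih]
        have h2 : ∑ i ∈ Finset.range p, r (l * p + i) x = Q x := by
          refine Finset.sum_congr rfl (fun i _ => ?_)
          rw [add_comm (l * p) i, hrper l i x]
        rw [h2]; ring
  -- recurrence
  have hrec : ∀ (lam : ℕ) (x : ZMod m),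
      triCount m u (lam * p + p) x
        = triCount m u (lam * p) x + lam * Q x + triCount m u p x := by
    intro lam x
    unfold triCount
    rw [Finset.sum_range_add]
    have hsecond : (∑ i ∈ Finset.range p,
        ∑ j ∈ Finset.range (lam * p + p - (lam * p + i)),
          if (derZ m)^[lam * p + i] u (j : ℤ) = x then 1 else 0)
        = ∑ i ∈ Finset.range p, ∑ j ∈ Finset.range (p - i),
          if (derZ m)^[i] u (j : ℤ) = x then 1 else 0 := by
      refine Finset.sum_congr rfl (fun i _ => ?_)
      have hlen : lam * p + p - (lam * p + i) = p - i := by omega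
      rw [hlen]
      refine Finset.sum_congr rfl (fun j _ => ?_)
      rw [add_comm (lam * p) i, hcol' lam i (j : ℤ)]
    have hfirst : (∑ i ∈ Finset.range (lam * p),
        ∑ j ∈ Finset.range (lam * p + p - i),
          if (derZ m)^[i] u (j : ℤ) = x then 1 else 0)
        = (∑ i ∈ Finset.range (lam * p),
            ∑ j ∈ Finset.range (lam * p - i),
              if (derZ m)^[i] u (j : ℤ) = x then 1 else 0)
          + ∑ i ∈ Finset.range (lam * p), r i x := by
      rw [← Finset.sum_add_distrib]
      refine Finset.sum_congr rfl (fun i hi => ?_)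
      have hi' := Finset.mem_range.mp hi
      have hlen : lam * p + p - i = (lam * p - i) + p := by omega
      rw [hlen, Finset.sum_range_add]
      congr 1
      have := shift_sum hp ((derZ m)^[i] u) (hrow i) ((lam * p - i : ℕ) : ℤ) x
      simp only [hr]
      rw [← this]
      refine Finset.sum_congr rfl (fun j _ => ?_)
      have hc : (((lam * p - i + j : ℕ) : ℤ)) = ((lam * p - i : ℕ) : ℤ) + ((j : ℕ) : ℤ) := by
        push_cast; ring
      rw [hc]
    rw [hfirst, hsecond, hQsum lam x]
  -- closed formula
  have hform : ∀ (lam : ℕ) (x : ZMod m),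
      triCount m u (lam * p) x
        = lam * triCount m u p x + lam.choose 2 * Q x := by
    intro lam x
    induction lam with
    | zero => simp [triCount]
    | succ l ih =>
        have h : (l + 1) * p = l * p + p := by ring
        rw [h, hrec l x, ih]
        have hc : (l + 1).choose 2 = l.choose 2 + l := by
          rw [Nat.choose_succ_succ, Nat.choose_one_right, Nat.add_comm]
        rw [hc]; ring
  -- linear algebra step
  intro lam x y
  rw [hform lam x, hform lam y]
  set t1 : ℕ := triCount m u p x
  set t2 : ℕ := triCount m u p y
  set q1 : ℕ := Q x
  set q2 : ℕ := Q y
  have e1 : lam₁ * t1 + lam₁.choose 2 * q1 = lam₁ * t2 + lam₁.choose 2 * q2 := by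
    have := hb1 x y
    rwa [hform lam₁ x, hform lam₁ y] at this
  have e2 : lam₂ * t1 + lam₂.choose 2 * q1 = lam₂ * t2 + lam₂.choose 2 * q2 := by
    have := hb2 x y
    rwa [hform lam₂ x, hform lam₂ y] at this
  -- work in ℤ
  have E1 : (lam₁ : ℤ) * ((t1 : ℤ) - t2) = (lam₁.choose 2 : ℤ) * ((q2 : ℤ) - q1) := by
    have := congrArg (fun n : ℕ => (n : ℤ)) e1
    push_cast at this
    linarith
  have E2 : (lam₂ : ℤ) * ((t1 : ℤ) - t2) = (lam₂.choose 2 : ℤ) * ((q2 : ℤ) - q1) := by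
    have := congrArg (fun n : ℕ => (n : ℤ)) e2
    push_cast at this
    linarith
  have hdet : (lam₁ : ℤ) * lam₂.choose 2 ≠ (lam₂ : ℤ) * lam₁.choose 2 := by
    intro hcon
    have hcon' : lam₁ * lam₂.choose 2 = lam₂ * lam₁.choose 2 := by exact_mod_cast hcon
    have h2c : 2 * (lam₁ * lam₂.choose 2) = 2 * (lam₂ * lam₁.choose 2) := by omega
    have ha : 2 * (lam₁ * lam₂.choose 2) = lam₁ * (lam₂ * (lam₂ - 1)) := by
      rw [← two_mul_choose_two lam₂]; ring
    have hb : 2 * (lam₂ * lam₁.choose 2) = lam₂ * (lam₁ * (lam₁ - 1)) := by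
      rw [← two_mul_choose_two lam₁]; ring
    rw [ha, hb] at h2c
    have hl : lam₂ - 1 = lam₁ - 1 := by
      have hpos : 0 < lam₁ * lam₂ := Nat.mul_pos h1 h2
      have h2c' : (lam₁ * lam₂) * (lam₂ - 1) = (lam₁ * lam₂) * (lam₁ - 1) := by
        calc (lam₁ * lam₂) * (lam₂ - 1) = lam₁ * (lam₂ * (lam₂ - 1)) := by ring
          _ = lam₂ * (lam₁ * (lam₁ - 1)) := h2c
          _ = (lam₁ * lam₂) * (lam₁ - 1) := by ring
      exact Nat.eq_of_mul_eq_mul_left hpos h2c'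
    omega
  -- deduce q1 = q2 and t1 = t2
  have hq : (q2 : ℤ) - q1 = 0 := by
    by_contra hq0
    apply hdet
    have h3 : (lam₂ : ℤ) * ((lam₁ : ℤ) * ((t1 : ℤ) - t2))
        = (lam₁ : ℤ) * ((lam₂ : ℤ) * ((t1 : ℤ) - t2)) := by ring
    rw [E1, E2] at h3
    have h4 : ((lam₂ : ℤ) * lam₁.choose 2 - (lam₁ : ℤ) * lam₂.choose 2)
        * ((q2 : ℤ) - q1) = 0 := by linarith
    rcases mul_eq_zero.mp h4 with h5 | h5
    · linarith
    · exact absurd h5 hq0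
  have ht : (t1 : ℤ) - t2 = 0 := by
    have : (lam₁ : ℤ) * ((t1 : ℤ) - t2) = 0 := by rw [E1, hq, mul_zero]
    have hl1 : (lam₁ : ℤ) ≠ 0 := by exact_mod_cast h1.ne'
    exact (mul_eq_zero.mp this).resolve_left hl1
  have ht' : t1 = t2 := by exact_mod_cast sub_eq_zero.mp ht
  have hq' : q1 = q2 := by
    have := sub_eq_zero.mp hq
    exact_mod_cast this.symm
  rw [ht', hq']
end

section
/- Let S = (u_j)_{j∈ℤ} be the dk-periodic interlaced arithmetic progression IAP(A, D) over ℤ/mℤ with k-tuples A = (a_0,...,a_{k-1}) and D = (d_0,...,d_{k-1}). The first period (u_j)_{j=0}^{dk-1} is antisymmetric if and only if d_r = a_r + a_{k-1-r} for all r ∈ {0,...,k-1}. -/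
section

variable {m k : ℕ} {a d : ℕ → ZMod m}

lemma iapSeq_mul_add (q : ℤ) {r : ℕ} (hr : r < k) :
    iapSeq m k a d (q * k + r) = a r + q * d r := by
  have hr' : (r : ℤ) < k := by exact_mod_cast hr
  have hmod : (q * k + r) % (k : ℤ) = r := by
    rw [add_comm, Int.add_mul_emod_self_right, Int.emod_eq_of_lt (by positivity) hr']
  have hdiv : (q * k + r) / (k : ℤ) = q := by
    rw [add_comm, Int.add_mul_ediv_right _ _ (by omega),
      Int.ediv_eq_zero_of_lt (by positivity) hr', zero_add]
  simp [iapSeq, hmod, hdiv]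

lemma natCast_mul_eq_zero_of_periodic {c : ℕ}
    (hper : ∀ j : ℤ, iapSeq m k a d (j + c * k) = iapSeq m k a d j) {r : ℕ} (hr : r < k) :
    (c : ZMod m) * d r = 0 := by
  have h := hper r
  have h0 := iapSeq_mul_add (a := a) (d := d) 0 hr
  rw [add_comm, iapSeq_mul_add _ hr] at h
  simp_all

lemma iapSeq_reflect {c q r : ℕ} (hq : q < c) (hr : r < k) :
    iapSeq m k a d ((c * k - 1 - (q * k + r) : ℕ) : ℤ) =
      a (k - 1 - r) + ((c : ZMod m) - 1 - q) * d (k - 1 - r) := by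
  have hidx : ((c * k - 1 - (q * k + r) : ℕ) : ℤ) = ((c : ℤ) - 1 - q) * k + (k - 1 - r : ℕ) := by
    obtain ⟨s, rfl⟩ := Nat.exists_eq_add_of_lt hq
    obtain ⟨t, rfl⟩ := Nat.exists_eq_add_of_lt hr
    have hprod : (q + s + 1) * (r + t + 1) = q * (r + t + 1) + s * (r + t + 1) + (r + t + 1) := by
      ring
    rw [hprod, show r + t + 1 - 1 - r = t by omega]
    push_cast [show q * (r + t + 1) + s * (r + t + 1) + (r + t + 1) - 1 - (q * (r + t + 1) + r)
      = s * (r + t + 1) + t by omega]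
    ring
  rw [hidx, iapSeq_mul_add _ (by omega)]
  push_cast
  ring

lemma iapSeq_reflect_eq_neg_iff {c q r : ℕ}
    (hper : ∀ j : ℤ, iapSeq m k a d (j + c * k) = iapSeq m k a d j) (hq : q < c) (hr : r < k) :
    iapSeq m k a d ((c * k - 1 - (q * k + r) : ℕ) : ℤ) = -iapSeq m k a d ((q * k + r : ℕ) : ℤ) ↔
      (q + 1) * d (k - 1 - r) - q * d r = a r + a (k - 1 - r) := by
  have hc := natCast_mul_eq_zero_of_periodic hper (show k - 1 - r < k by omega)
  rw [iapSeq_reflect hq hr, Nat.cast_add, Nat.cast_mul, iapSeq_mul_add _ hr]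
  push_cast
  constructor <;> intro h <;> linear_combination hc - h

end

theorem iap_antisymmetric_first_period_general (m k c : ℕ) (hc : 0 < c)
    (a d : ℕ → ZMod m)
    (hper : ∀ j : ℤ, iapSeq m k a d (j + c * k) = iapSeq m k a d j) :
    (∀ j < c * k, iapSeq m k a d ((c * k - 1 - j : ℕ) : ℤ) = -iapSeq m k a d (j : ℤ)) ↔
      (∀ r < k, d r = a r + a (k - 1 - r)) := by
  constructor
  · intro h r hr
    have hlt : k - 1 - r < c * k := by have := Nat.le_mul_of_pos_left k hc; omega
    have h0 := (iapSeq_reflect_eq_neg_iff hper hc (show k - 1 - r < k by omega)).1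
      (by simpa using h (k - 1 - r) hlt)
    rw [show k - 1 - (k - 1 - r) = r by omega] at h0
    simpa [add_comm] using h0
  · intro h j hj
    have hk : 0 < k := Nat.pos_of_mul_pos_left (by omega : 0 < c * k)
    have hr := Nat.mod_lt j hk
    rw [← Nat.div_add_mod' j k]
    refine (iapSeq_reflect_eq_neg_iff hper (Nat.div_lt_of_lt_mul (by rwa [mul_comm])) hr).2 ?_
    rw [h _ (by omega), h _ hr, show k - 1 - (k - 1 - j % k) = j % k by omega]
    ring

/-- For a `ck`-periodic `IAP(A,D)`, the first period `(u_j)_{j=0}^{ck-1}` is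
antisymmetric iff `d_r = a_r + a_{k-1-r}` for all `r < k`. -/
theorem iap_antisymmetric_first_period (m k c : ℕ) (hm : 0 < m) (hk : 0 < k) (hc : 0 < c)
    (a d : ℕ → ZMod m)
    (hper : ∀ j : ℤ, iapSeq m k a d (j + c * k) = iapSeq m k a d j) :
    (∀ j < c * k, iapSeq m k a d ((c * k - 1 - j : ℕ) : ℤ) = -iapSeq m k a d (j : ℤ)) ↔
      (∀ r < k, d r = a r + a (k - 1 - r)) :=
  iap_antisymmetric_first_period_general m k c hc a d hper
end

section
/- For all non-negative integers i and j, the k×k integer matrices C_k^i = (Σ_{α∈ℤ} binom(i, αk + r - s))_{1≤r,s≤k} and T_k^i = (Σ_{α∈ℤ} α·binom(i, αk + r - s))_{1≤r,s≤k} satisfy C_k^{i+j} = C_k^i · C_k^j and T_k^{i+j} = T_k^i · C_k^j + C_k^i · T_k^j. -/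
/-- Binomial coefficient with integer lower index, vanishing outside `0 ≤ b ≤ i`. -/
def binomZ (i : ℕ) (b : ℤ) : ℤ := if b < 0 then 0 else i.choose b.toNat

/-- The circulant matrix `C_k^i = (Σ_{α∈ℤ} binom(i, αk + r - s))_{r,s}`. -/
noncomputable def Ck (k i : ℕ) : Matrix (Fin k) (Fin k) ℤ :=
  Matrix.of fun r s => ∑ᶠ α : ℤ, binomZ i (α * k + (r : ℤ) - (s : ℤ))

/-- The Toeplitz matrix `T_k^i = (Σ_{α∈ℤ} α·binom(i, αk + r - s))_{r,s}`. -/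
noncomputable def Tk (k i : ℕ) : Matrix (Fin k) (Fin k) ℤ :=
  Matrix.of fun r s => ∑ᶠ α : ℤ, α * binomZ i (α * k + (r : ℤ) - (s : ℤ))

open TrivSqZeroExt

lemma binomZ_ne_zero {i : ℕ} {b : ℤ} (h : binomZ i b ≠ 0) : 0 ≤ b ∧ b ≤ i := by
  unfold binomZ at h
  split_ifs at h with hb
  · simp at h
  · push_neg at hb
    refine ⟨hb, ?_⟩
    by_contra hlt
    push_neg at hlt
    have : i < b.toNat := by omega
    rw [Nat.choose_eq_zero_of_lt this] at h
    simp at h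

lemma binomZ_pascal (i : ℕ) (b : ℤ) :
    binomZ (i + 1) b = binomZ i b + binomZ i (b - 1) := by
  unfold binomZ
  rcases lt_trichotomy b 0 with hb | hb | hb
  · rw [if_pos hb, if_pos hb, if_pos (by omega)]; ring
  · subst hb
    norm_num
  · rw [if_neg (by omega), if_neg (by omega), if_neg (by omega)]
    have h1 : b.toNat = (b - 1).toNat + 1 := by omega
    rw [h1, Nat.choose_succ_succ]
    push_cast
    ring

lemma csupport_finite (k i : ℕ) (hk : 0 < k) (c : ℤ) :
    (Function.support fun α : ℤ => binomZ i (α * k + c)).Finite := by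
  have hsub : (Function.support fun α : ℤ => binomZ i (α * k + c)) ⊆
      (fun α : ℤ => α * k + c) ⁻¹' (Set.Icc 0 i) := by
    intro α hα
    exact binomZ_ne_zero hα
  refine Set.Finite.subset (Set.Finite.preimage ?_ (Set.finite_Icc (0:ℤ) i)) hsub
  intro a _ b _ hab
  have hk' : (k : ℤ) ≠ 0 := by exact_mod_cast hk.ne'
  have hab' : a * (k : ℤ) + c = b * (k : ℤ) + c := hab
  have : a * (k : ℤ) = b * k := by linarith
  exact mul_right_cancel₀ hk' this

lemma tsupport_finite (k i : ℕ) (hk : 0 < k) (c : ℤ) :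
    (Function.support fun α : ℤ => α * binomZ i (α * k + c)).Finite := by
  refine Set.Finite.subset (csupport_finite k i hk c) ?_
  intro α hα
  simp only [Function.mem_support] at hα ⊢
  intro h
  rw [h] at hα
  simp at hα

lemma alpha_zero {k α x : ℤ} (hk : 0 < k) (h1 : -k < x) (h2 : x < k) (h : α * k = x) :
    α = 0 := by
  rcases lt_trichotomy α 0 with h' | h' | h'
  · have : α * k ≤ (-1) * k := mul_le_mul_of_nonneg_right (by omega) hk.le
    linarith
  · exact h'
  · have : 1 * k ≤ α * k := mul_le_mul_of_nonneg_right (by omega) hk.le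
    linarith

lemma csupport_finite' (k i : ℕ) (hk : 0 < k) (c d : ℤ) :
    (Function.support fun α : ℤ => binomZ i (α * k + c - d)).Finite := by
  have h : (fun α : ℤ => binomZ i (α * k + c - d)) =
      fun α : ℤ => binomZ i (α * k + (c - d)) := by
    funext α; congr 1; ring
  rw [h]; exact csupport_finite k i hk (c - d)

lemma tsupport_finite' (k i : ℕ) (hk : 0 < k) (c d : ℤ) :
    (Function.support fun α : ℤ => α * binomZ i (α * k + c - d)).Finite := by
  have h : (fun α : ℤ => α * binomZ i (α * k + c - d)) =
      fun α : ℤ => α * binomZ i (α * k + (c - d)) := by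
    funext α; congr 2; ring
  rw [h]; exact tsupport_finite k i hk (c - d)

/-- The matrix `Ck + ε·Tk` over the dual numbers. -/
noncomputable def Fm (k i : ℕ) : Matrix (Fin k) (Fin k) (DualNumber ℤ) :=
  Matrix.of fun r s => inl (Ck k i r s) + inr (Tk k i r s)

/-- The cyclic shift matrix with wrap-around weight `1 + ε`. -/
noncomputable def Nm (k : ℕ) : Matrix (Fin k) (Fin k) (DualNumber ℤ) :=
  Matrix.of fun t s => if ((s : ℕ) + 1) % k = (t : ℕ) then
    (if (s : ℕ) + 1 = k then 1 + inr 1 else 1) else 0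

lemma fst_Fm (k i : ℕ) (r s : Fin k) : (Fm k i r s).fst = Ck k i r s := by
  simp [Fm]

lemma snd_Fm (k i : ℕ) (r s : Fin k) : (Fm k i r s).snd = Tk k i r s := by
  simp [Fm]

lemma Ck_zero (k : ℕ) (hk : 0 < k) : Ck k 0 = 1 := by
  ext r s
  have key : ∀ α : ℤ, binomZ 0 (α * k + (r : ℤ) - s) ≠ 0 → α = 0 ∧ r = s := by
    intro α hα
    have h := binomZ_ne_zero hα
    have hr : (r : ℤ) < k := by exact_mod_cast r.isLt
    have hs : (s : ℤ) < k := by exact_mod_cast s.isLt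
    have hr0 : (0 : ℤ) ≤ r := by positivity
    have hs0 : (0 : ℤ) ≤ s := by positivity
    have hk' : (0 : ℤ) < k := by exact_mod_cast hk
    have hα0 : α = 0 := alpha_zero hk' (x := (s : ℤ) - r) (by omega) (by omega)
      (by have h2 := h.2; have h1 := h.1; push_cast at h2; linarith)
    refine ⟨hα0, ?_⟩
    subst hα0
    simp only [zero_mul, zero_add] at h
    have : (r : ℤ) = s := by omega
    exact Fin.ext (by exact_mod_cast this)
  simp only [Ck, Matrix.of_apply, Matrix.one_apply]
  by_cases hrs : r = s
  · subst hrs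
    rw [if_pos rfl]
    rw [finsum_eq_single _ 0]
    · simp [binomZ]
    · intro α hα
      by_contra hne
      exact hα (key α hne).1
  · rw [if_neg hrs]
    apply finsum_eq_zero_of_forall_eq_zero
    intro α
    by_contra hne
    exact hrs (key α hne).2

lemma Tk_zero (k : ℕ) (hk : 0 < k) : Tk k 0 = 0 := by
  ext r s
  simp only [Tk, Matrix.of_apply, Matrix.zero_apply]
  apply finsum_eq_zero_of_forall_eq_zero
  intro α
  by_cases h : binomZ 0 (α * k + (r : ℤ) - s) = 0
  · rw [h, mul_zero]
  · have hb := binomZ_ne_zero h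
    have hr : (r : ℤ) < k := by exact_mod_cast r.isLt
    have hs : (s : ℤ) < k := by exact_mod_cast s.isLt
    have hr0 : (0 : ℤ) ≤ r := by positivity
    have hs0 : (0 : ℤ) ≤ s := by positivity
    have hk' : (0 : ℤ) < k := by exact_mod_cast hk
    have hα0 : α = 0 := alpha_zero hk' (x := (s : ℤ) - r) (by omega) (by omega)
      (by have h2 := hb.2; have h1 := hb.1; push_cast at h2; linarith)
    rw [hα0, zero_mul]

lemma Fm_succ (k : ℕ) (hk : 0 < k) (i : ℕ) :
    Fm k (i + 1) = Fm k i * (1 + Nm k) := by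
  rw [mul_add, mul_one]
  refine Matrix.ext fun r s => ?_
  have ht0 : ((s : ℕ) + 1) % k < k := Nat.mod_lt _ hk
  set t₀ : Fin k := ⟨((s : ℕ) + 1) % k, ht0⟩ with ht₀
  have hsum : (Fm k i * Nm k) r s = Fm k i r t₀ * Nm k t₀ s := by
    rw [Matrix.mul_apply]
    apply Fintype.sum_eq_single
    intro t htne
    have : ¬(((s : ℕ) + 1) % k = (t : ℕ)) := by
      intro h
      exact htne (Fin.ext h.symm)
    simp [Nm, this]
  have hNt₀ : Nm k t₀ s = if (s : ℕ) + 1 = k then 1 + inr 1 else 1 := by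
    simp [Nm, ht₀]
  -- finiteness of supports
  have fin1 : ∀ c : ℤ, (Function.support fun α : ℤ => binomZ i (α * k + c)).Finite :=
    csupport_finite k i hk
  have fin2 : ∀ c : ℤ, (Function.support fun α : ℤ => α * binomZ i (α * k + c)).Finite :=
    tsupport_finite k i hk
  have CkPascal : Ck k (i + 1) r s =
      Ck k i r s + ∑ᶠ α : ℤ, binomZ i (α * k + ((r : ℤ) - s - 1)) := by
    simp only [Ck, Matrix.of_apply]
    have h1 : ∀ α : ℤ, binomZ (i + 1) (α * k + (r : ℤ) - s) =
        binomZ i (α * k + ((r : ℤ) - s)) + binomZ i (α * k + ((r : ℤ) - s - 1)) := by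
      intro α
      rw [binomZ_pascal]
      congr 2 <;> ring
    rw [finsum_congr h1, finsum_add_distrib (fin1 _) (fin1 _)]
    congr 1
    apply finsum_congr
    intro α
    congr 1
    ring
  have TkPascal : Tk k (i + 1) r s =
      Tk k i r s + ∑ᶠ α : ℤ, α * binomZ i (α * k + ((r : ℤ) - s - 1)) := by
    simp only [Tk, Matrix.of_apply]
    have h1 : ∀ α : ℤ, α * binomZ (i + 1) (α * k + (r : ℤ) - s) =
        α * binomZ i (α * k + ((r : ℤ) - s)) + α * binomZ i (α * k + ((r : ℤ) - s - 1)) := by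
      intro α
      rw [binomZ_pascal, mul_add,
        show α * ↑k + (r : ℤ) - s = α * ↑k + ((r : ℤ) - s) from by ring,
        show α * ↑k + ((r : ℤ) - s) - 1 = α * ↑k + ((r : ℤ) - s - 1) from by ring]
    rw [finsum_congr h1, finsum_add_distrib (fin2 _) (fin2 _)]
    congr 1
    apply finsum_congr
    intro α
    congr 2
    ring
  simp only [Matrix.add_apply, hsum, hNt₀]
  by_cases hcase : (s : ℕ) + 1 = k
  · -- wrap-around case: t₀ = 0 and weight 1 + ε
    rw [if_pos hcase]
    have ht₀v : (t₀ : ℕ) = 0 := by simp [ht₀, hcase]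
    have hsk : (s : ℤ) + 1 = k := by exact_mod_cast hcase
    -- reindexing identities
    have ht0z : ((t₀ : ℤ)) = 0 := by exact_mod_cast ht₀v
    have reC : (∑ᶠ α : ℤ, binomZ i (α * k + ((r : ℤ) - s - 1))) =
        ∑ᶠ α : ℤ, binomZ i (α * k + (r : ℤ) - t₀) := by
      rw [← finsum_comp_equiv (Equiv.subRight (1 : ℤ))
        (f := fun α : ℤ => binomZ i (α * k + (r : ℤ) - t₀))]
      apply finsum_congr
      intro α
      simp only [Equiv.subRight_apply]
      congr 1
      linear_combination ht0z - hsk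
    have reT : (∑ᶠ α : ℤ, α * binomZ i (α * k + ((r : ℤ) - s - 1))) =
        (∑ᶠ α : ℤ, α * binomZ i (α * k + (r : ℤ) - t₀)) +
        ∑ᶠ α : ℤ, binomZ i (α * k + (r : ℤ) - t₀) := by
      have step : (∑ᶠ α : ℤ, α * binomZ i (α * k + ((r : ℤ) - s - 1))) =
          ∑ᶠ α : ℤ, (α * binomZ i (α * k + (r : ℤ) - t₀) +
            binomZ i (α * k + (r : ℤ) - t₀)) := by
        rw [← finsum_comp_equiv (Equiv.subRight (1 : ℤ))
          (f := fun α : ℤ => α * binomZ i (α * k + (r : ℤ) - t₀) +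
            binomZ i (α * k + (r : ℤ) - t₀))]
        apply finsum_congr
        intro α
        simp only [Equiv.subRight_apply]
        have harg : (α - 1) * k + (r : ℤ) - t₀ = α * k + ((r : ℤ) - s - 1) := by
          linear_combination hsk - ht0z
        rw [harg]; ring
      rw [step]
      refine finsum_add_distrib ?_ ?_
      · exact tsupport_finite' k i hk (r : ℤ) (t₀ : ℤ)
      · exact csupport_finite' k i hk (r : ℤ) (t₀ : ℤ)
    apply TrivSqZeroExt.ext
    · simp only [fst_add, fst_Fm, fst_mul, fst_add, fst_inr, fst_one]
      rw [CkPascal, reC]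
      simp only [Fm, Matrix.of_apply, fst_add, fst_inl, fst_inr, Ck, Matrix.of_apply]
      ring
    · simp only [snd_add, snd_Fm, snd_mul, snd_add, snd_inr, snd_one, fst_add, fst_inr,
        fst_one, fst_Fm]
      rw [TkPascal, reT]
      simp only [Fm, Matrix.of_apply, fst_add, fst_inl, fst_inr, snd_add, snd_inl, snd_inr,
        Ck, Tk, Matrix.of_apply, smul_eq_mul, op_smul_eq_smul]
      ring_nf
      simp only [mul_comm (k : ℤ) _]
      ring
  · -- no wrap: t₀ = s + 1
    rw [if_neg hcase]
    have hslt : (s : ℕ) + 1 < k := by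
      have := s.isLt; omega
    have ht₀v : (t₀ : ℕ) = (s : ℕ) + 1 := by
      simp [ht₀, Nat.mod_eq_of_lt hslt]
    have ht0z : ((t₀ : ℤ)) = (s : ℤ) + 1 := by exact_mod_cast ht₀v
    have reC : (∑ᶠ α : ℤ, binomZ i (α * k + ((r : ℤ) - s - 1))) =
        ∑ᶠ α : ℤ, binomZ i (α * k + (r : ℤ) - t₀) := by
      apply finsum_congr
      intro α
      congr 1
      rw [ht0z]; ring
    have reT : (∑ᶠ α : ℤ, α * binomZ i (α * k + ((r : ℤ) - s - 1))) =
        ∑ᶠ α : ℤ, α * binomZ i (α * k + (r : ℤ) - t₀) := by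
      apply finsum_congr
      intro α
      congr 2
      rw [ht0z]; ring
    rw [mul_one]
    apply TrivSqZeroExt.ext
    · simp only [fst_add, fst_Fm]
      rw [CkPascal, reC]
      simp [Ck]
    · simp only [snd_add, snd_Fm]
      rw [TkPascal, reT]
      simp [Tk]

lemma Fm_eq_pow (k : ℕ) (hk : 0 < k) (i : ℕ) : Fm k i = (1 + Nm k) ^ i := by
  induction i with
  | zero =>
    rw [pow_zero]
    refine Matrix.ext fun r s => ?_
    apply TrivSqZeroExt.ext
    · simp only [fst_Fm, Ck_zero k hk]
      simp [Matrix.one_apply]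
      split_ifs <;> simp
    · simp only [snd_Fm, Tk_zero k hk]
      simp [Matrix.one_apply]
      split_ifs <;> simp
  | succ n ih =>
    rw [Fm_succ k hk n, ih, pow_succ]

/-- `C_k^{i+j} = C_k^i·C_k^j` and `T_k^{i+j} = T_k^i·C_k^j + C_k^i·T_k^j`. -/
theorem Ck_Tk_add (k : ℕ) (hk : 0 < k) (i j : ℕ) :
    Ck k (i + j) = Ck k i * Ck k j ∧
      Tk k (i + j) = Tk k i * Ck k j + Ck k i * Tk k j := by
  have key : Fm k (i + j) = Fm k i * Fm k j := by
    rw [Fm_eq_pow k hk, Fm_eq_pow k hk, Fm_eq_pow k hk, pow_add]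
  constructor
  · ext r s
    have h1 : (Fm k (i + j) r s).fst = ((Fm k i * Fm k j) r s).fst := by rw [key]
    rw [fst_Fm] at h1
    rw [h1, Matrix.mul_apply, TrivSqZeroExt.fst_sum, Matrix.mul_apply]
    apply Finset.sum_congr rfl
    intro t _
    rw [fst_mul, fst_Fm, fst_Fm]
  · ext r s
    have h1 : (Fm k (i + j) r s).snd = ((Fm k i * Fm k j) r s).snd := by rw [key]
    rw [snd_Fm] at h1
    rw [h1, Matrix.mul_apply, TrivSqZeroExt.snd_sum]
    simp only [snd_mul, fst_Fm, snd_Fm, smul_eq_mul, op_smul_eq_smul]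
    rw [Matrix.add_apply, Matrix.mul_apply, Matrix.mul_apply, ← Finset.sum_add_distrib]
    apply Finset.sum_congr rfl
    intro t _
    ring
end

section
/- Let a, d₁, d₂ ∈ ℤ/mℤ with gcd(d₁,m) = gcd(d₂,m), and let n be a positive integer with n ≡ 0 or n ≡ -1 modulo m/gcd(d₁,m). Then the multiplicity function of the arithmetic triangle ∇ = (a + i·d₂ + j·d₁)_{i+j<n, i,j≥0} satisfies mult_∇(x + gcd(d₂-d₁, m)) = mult_∇(x) for all x ∈ ℤ/mℤ. -/
open Finset

section Aux
variable {m : ℕ}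

private lemma ifcongr {m : ℕ} {u v x y : ZMod m} (h : (u = x) ↔ (v = y)) :
    (if u = x then (1 : ℕ) else 0) = if v = y then 1 else 0 := by
  simp only [h]

private lemma period_iter (f : ℕ → ℕ) (r : ℕ) (hf : ∀ s, f (s + r) = f s) (k t : ℕ) :
    f (t + r * k) = f t := by
  induction k with
  | zero => simp
  | succ k ih =>
    have h : t + r * (k + 1) = (t + r * k) + r := by ring
    rw [h, hf, ih]

private lemma sum_period (f : ℕ → ℕ) (r : ℕ) (hf : ∀ s, f (s + r) = f s) (k : ℕ) :
    ∑ s ∈ range (r * k), f s = k * ∑ t ∈ range r, f t := by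
  induction k with
  | zero => simp
  | succ k ih =>
    have h1 : r * (k + 1) = r * k + r := by ring
    rw [h1, Finset.sum_range_add, ih]
    have h2 : ∀ t ∈ range r, f (r * k + t) = f t := by
      intro t _
      rw [Nat.add_comm]; exact period_iter f r hf k t
    rw [Finset.sum_congr rfl h2]; ring

private lemma nsmul_inj [NeZero m] (d : ZMod m) {s t : ℕ} (hs : s < addOrderOf d)
    (ht : t < addOrderOf d) (h : (s : ZMod m) * d = (t : ZMod m) * d) : s = t := by
  wlog hle : t ≤ s generalizing s t
  · exact (this ht hs h.symm (le_of_not_ge hle)).symm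
  have h0 : ((s - t : ℕ) : ZMod m) * d = 0 := by
    have hc : ((s - t : ℕ) : ZMod m) = (s : ZMod m) - t := by
      push_cast [Nat.cast_sub hle]; ring
    rw [hc, sub_mul, h, sub_self]
  have hdvd : addOrderOf d ∣ s - t := by
    rw [addOrderOf_dvd_iff_nsmul_eq_zero]
    simpa [nsmul_eq_mul] using h0
  have hlt : s - t < addOrderOf d := lt_of_le_of_lt (Nat.sub_le _ _) hs
  have := Nat.eq_zero_of_dvd_of_lt hdvd hlt
  omega

private lemma count_hit [NeZero m] (d c : ZMod m) :
    (∑ t ∈ range (addOrderOf d), if (t : ZMod m) * d = c then 1 else 0)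
      = if ∃ z : ZMod m, z * d = c then 1 else 0 := by
  by_cases h : ∃ z : ZMod m, z * d = c
  · obtain ⟨z, hz⟩ := h
    have hr : 0 < addOrderOf d := addOrderOf_pos d
    set r := addOrderOf d with hrdef
    set t₀ := z.val % r with ht₀
    have ht₀lt : t₀ < r := Nat.mod_lt _ hr
    have ht₀eq : (t₀ : ZMod m) * d = c := by
      have h1 : (t₀ : ZMod m) * d = t₀ • d := by rw [nsmul_eq_mul]
      have h2 : (z.val : ZMod m) * d = z.val • d := by rw [nsmul_eq_mul]
      have h3 : t₀ • d = z.val • d := mod_addOrderOf_nsmul d z.val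
      rw [h1, h3, ← h2, ZMod.natCast_zmod_val, hz]
    have key : ∀ t ∈ range r, ((if (t : ZMod m) * d = c then 1 else 0) : ℕ)
        = if t = t₀ then 1 else 0 := by
      intro t htr
      rw [mem_range] at htr
      by_cases he : t = t₀
      · subst he; simp [ht₀eq]
      · have hne : ¬ ((t : ZMod m) * d = c) := by
          intro hc
          exact he (nsmul_inj d htr ht₀lt (by rw [hc, ht₀eq]))
        simp [hne, he]
    rw [Finset.sum_congr rfl key, Finset.sum_ite_eq' (range r) t₀ (fun _ => 1),
      if_pos (mem_range.mpr ht₀lt), if_pos ⟨z, hz⟩]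
  · rw [if_neg h]
    apply Finset.sum_eq_zero
    intro t _
    have hne : ¬ ((t : ZMod m) * d = c) := fun hc => h ⟨t, hc⟩
    simp [hne]

private lemma gcd_cast_eq (m k : ℕ) :
    ((Nat.gcd k m : ℕ) : ZMod m) = (Nat.gcdA k m : ZMod m) * (k : ZMod m) := by
  have h := Nat.gcd_eq_gcd_ab k m
  have h2 : (((Nat.gcd k m : ℕ) : ℤ) : ZMod m)
      = (((k : ℤ) * Nat.gcdA k m + (m : ℤ) * Nat.gcdB k m : ℤ) : ZMod m) := by
    exact_mod_cast congrArg (fun z : ℤ => (z : ZMod m)) h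
  push_cast at h2
  rw [ZMod.natCast_self] at h2
  rw [h2]; ring

private lemma exists_mul_gcd [NeZero m] (d y : ZMod m) :
    (∃ z : ZMod m, z * d = y) ↔ ∃ z : ZMod m, z * ((Nat.gcd d.val m : ℕ) : ZMod m) = y := by
  obtain ⟨t, ht⟩ : Nat.gcd d.val m ∣ d.val := Nat.gcd_dvd_left _ _
  have hd : ((Nat.gcd d.val m : ℕ) : ZMod m) * (t : ZMod m) = d := by
    have hv : ((d.val : ℕ) : ZMod m) = d := ZMod.natCast_zmod_val d
    rw [ht] at hv
    push_cast at hv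
    exact hv
  constructor
  · rintro ⟨z, hz⟩
    exact ⟨z * (t : ZMod m), by linear_combination z * hd - hz.symm⟩
  · rintro ⟨z, hz⟩
    refine ⟨z * (Nat.gcdA d.val m : ZMod m), ?_⟩
    have hb := gcd_cast_eq m d.val
    rw [ZMod.natCast_zmod_val] at hb
    linear_combination z * hb.symm + hz

private lemma key_count [NeZero m] (d₁ d₂ : ZMod m)
    (hg : Nat.gcd (ZMod.val d₁) m = Nat.gcd (ZMod.val d₂) m)
    (n : ℕ)
    (hmod : m / Nat.gcd (ZMod.val d₁) m ∣ n ∨ m / Nat.gcd (ZMod.val d₁) m ∣ (n + 1))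
    (c : ZMod m) :
    (∑ i ∈ range n, if ((i : ZMod m) + 1) * d₂ = c + d₁ then 1 else 0)
      = ∑ j ∈ range n, if (j : ZMod m) * d₁ = c then 1 else 0 := by
  set r := m / Nat.gcd (ZMod.val d₁) m with hrdef
  have hr1 : addOrderOf d₁ = r := by
    rw [hrdef, ← ZMod.natCast_zmod_val d₁, ZMod.addOrderOf_coe _ (NeZero.ne m),
      Nat.gcd_comm, ZMod.val_natCast_of_lt (ZMod.val_lt d₁)]
  have hr2 : addOrderOf d₂ = r := by
    rw [hrdef, hg, ← ZMod.natCast_zmod_val d₂, ZMod.addOrderOf_coe _ (NeZero.ne m),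
      Nat.gcd_comm, ZMod.val_natCast_of_lt (ZMod.val_lt d₂)]
  set F : ℕ → ℕ := fun i => if (i : ZMod m) * d₂ = c + d₁ then 1 else 0 with hF
  set G : ℕ → ℕ := fun j => if (j : ZMod m) * d₁ = c then 1 else 0 with hG
  have hr2' : (r : ZMod m) * d₂ = 0 := by
    have hh := addOrderOf_nsmul_eq_zero d₂
    rwa [hr2, nsmul_eq_mul] at hh
  have hr1' : (r : ZMod m) * d₁ = 0 := by
    have hh := addOrderOf_nsmul_eq_zero d₁
    rwa [hr1, nsmul_eq_mul] at hh
  have hFper : ∀ s, F (s + r) = F s := by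
    intro s
    have hc : ((s + r : ℕ) : ZMod m) * d₂ = (s : ZMod m) * d₂ := by
      push_cast; rw [add_mul, hr2', add_zero]
    simp only [hF, hc]
  have hGper : ∀ s, G (s + r) = G s := by
    intro s
    have hc : ((s + r : ℕ) : ZMod m) * d₁ = (s : ZMod m) * d₁ := by
      push_cast; rw [add_mul, hr1', add_zero]
    simp only [hG, hc]
  have hM : (∑ t ∈ range r, F t) = ∑ t ∈ range r, G t := by
    rw [show (∑ t ∈ range r, F t) = ∑ t ∈ range (addOrderOf d₂), F t by rw [hr2],
        show (∑ t ∈ range r, G t) = ∑ t ∈ range (addOrderOf d₁), G t by rw [hr1]]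
    simp only [hF, hG]
    rw [count_hit d₂ (c + d₁), count_hit d₁ c]
    have hiff : (∃ z : ZMod m, z * d₂ = c + d₁) ↔ (∃ z : ZMod m, z * d₁ = c) := by
      rw [exists_mul_gcd d₂ (c + d₁), exists_mul_gcd d₁ c, ← hg]
      obtain ⟨t, ht⟩ : Nat.gcd d₁.val m ∣ d₁.val := Nat.gcd_dvd_left _ _
      have hd₁ : ((Nat.gcd d₁.val m : ℕ) : ZMod m) * (t : ZMod m) = d₁ := by
        have hv : ((d₁.val : ℕ) : ZMod m) = d₁ := ZMod.natCast_zmod_val d₁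
        rw [ht] at hv
        push_cast at hv
        exact hv
      constructor
      · rintro ⟨z, hz⟩
        exact ⟨z - t, by linear_combination hz - hd₁⟩
      · rintro ⟨z, hz⟩
        exact ⟨z + t, by linear_combination hz + hd₁⟩
    simp [hiff]
  have hLHS : (∑ i ∈ range n, if ((i : ZMod m) + 1) * d₂ = c + d₁ then 1 else 0)
      = ∑ i ∈ range n, F (i + 1) := by
    apply Finset.sum_congr rfl
    intro i _
    have hcast : (((i + 1) : ℕ) : ZMod m) = (i : ZMod m) + 1 := by push_cast; ring
    simp only [hF, hcast]
  rw [hLHS]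
  have hsum' : (∑ i ∈ range n, F (i + 1)) + F 0 = ∑ i ∈ range (n + 1), F i :=
    (Finset.sum_range_succ' F n).symm
  rcases hmod with ⟨k, hk⟩ | ⟨k, hk⟩
  · have hFn : F n = F 0 := by
      have hh := period_iter F r hFper k 0
      rwa [Nat.zero_add, ← hk] at hh
    have h1 : (∑ i ∈ range (n + 1), F i) = (∑ i ∈ range n, F i) + F n :=
      Finset.sum_range_succ F n
    have h2 : (∑ i ∈ range n, F i) = k * ∑ t ∈ range r, F t := by
      rw [hk]; exact sum_period F r hFper k
    have h3 : (∑ j ∈ range n, G j) = k * ∑ t ∈ range r, G t := by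
      rw [hk]; exact sum_period G r hGper k
    have h4 : (∑ i ∈ range n, F (i + 1)) + F 0 = (∑ i ∈ range n, F i) + F n := by
      rw [hsum', h1]
    rw [hFn] at h4
    have h5 : (∑ i ∈ range n, F (i + 1)) = ∑ i ∈ range n, F i := by omega
    rw [h5, h2, h3, hM]
  · have h1 : (∑ i ∈ range (n + 1), F i) = k * ∑ t ∈ range r, F t := by
      rw [hk]; exact sum_period F r hFper k
    have h2 : (∑ j ∈ range (n + 1), G j) = k * ∑ t ∈ range r, G t := by
      rw [hk]; exact sum_period G r hGper k
    have h3 : (∑ j ∈ range (n + 1), G j) = (∑ j ∈ range n, G j) + G n :=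
      Finset.sum_range_succ G n
    have hF0Gn : F 0 = G n := by
      simp only [hF, hG]
      have hnd : (n : ZMod m) * d₁ = -d₁ := by
        have hdvd : addOrderOf d₁ ∣ n + 1 := by rw [hr1]; exact ⟨k, hk⟩
        have hz := addOrderOf_dvd_iff_nsmul_eq_zero.mp hdvd
        rw [nsmul_eq_mul] at hz
        push_cast at hz
        linear_combination hz
      apply ifcongr
      rw [hnd]
      push_cast
      constructor
      · intro h; linear_combination h
      · intro h; linear_combination h
    have hA : (∑ i ∈ range n, F (i + 1)) + F 0 = (∑ j ∈ range n, G j) + G n := by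
      rw [hsum', h1, hM, ← h2, h3]
    rw [hF0Gn] at hA
    exact Nat.add_right_cancel hA

end Aux

section Main
variable {m : ℕ}

private def S (m : ℕ) (a d₁ d₂ : ZMod m) (n : ℕ) (x : ZMod m) : ℕ :=
  ∑ i ∈ range n, ∑ j ∈ range (n - i),
    if a + (i : ZMod m) * d₂ + (j : ZMod m) * d₁ = x then 1 else 0

private lemma step [NeZero m] (a d₁ d₂ : ZMod m)
    (hg : Nat.gcd (ZMod.val d₁) m = Nat.gcd (ZMod.val d₂) m)
    (n : ℕ) (hn : 0 < n)
    (hmod : m / Nat.gcd (ZMod.val d₁) m ∣ n ∨ m / Nat.gcd (ZMod.val d₁) m ∣ (n + 1))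
    (y : ZMod m) :
    S m a d₁ d₂ n (y - (d₂ - d₁)) = S m a d₁ d₂ n y := by
  obtain ⟨N, rfl⟩ : ∃ N, n = N + 1 := ⟨n - 1, by omega⟩
  have claimA : ∀ w : ZMod m, S m a d₁ d₂ (N + 1) w
      = (∑ j ∈ range (N + 1), if a + (j : ZMod m) * d₁ = w then 1 else 0)
        + ∑ i ∈ range N, ∑ j ∈ range (N - i),
            if a + ((i : ZMod m) + 1) * d₂ + (j : ZMod m) * d₁ = w then 1 else 0 := by
    intro w
    rw [S, Finset.sum_range_succ']
    rw [add_comm]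
    congr 1
    · have h0 : N + 1 - 0 = N + 1 := by omega
      rw [h0]
      apply Finset.sum_congr rfl
      intro j _
      apply ifcongr
      push_cast
      constructor
      · intro h; linear_combination h
      · intro h; linear_combination h
    · apply Finset.sum_congr rfl
      intro i _
      have hrange : N + 1 - (i + 1) = N - i := by omega
      rw [hrange]
      apply Finset.sum_congr rfl
      intro j _
      apply ifcongr
      push_cast
      constructor
      · intro h; linear_combination h
      · intro h; linear_combination h
  have claimB : ∀ w : ZMod m, S m a d₁ d₂ (N + 1) w
      = (∑ i ∈ range (N + 1), if a + (i : ZMod m) * d₂ = w then 1 else 0)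
        + ∑ i ∈ range (N + 1), ∑ j ∈ range (N + 1 - i - 1),
            if a + (i : ZMod m) * d₂ + ((j : ZMod m) + 1) * d₁ = w then 1 else 0 := by
    intro w
    rw [S, ← Finset.sum_add_distrib]
    apply Finset.sum_congr rfl
    intro i hi
    rw [mem_range] at hi
    have hni : N + 1 - i = (N + 1 - i - 1) + 1 := by omega
    rw [hni, Finset.sum_range_succ']
    rw [add_comm]
    congr 1
    · apply ifcongr
      push_cast
      constructor
      · intro h; linear_combination h
      · intro h; linear_combination h
    · apply Finset.sum_congr rfl
      intro j _
      apply ifcongr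
      push_cast
      constructor
      · intro h; linear_combination h
      · intro h; linear_combination h
  have claimC : (∑ i ∈ range (N + 1), ∑ j ∈ range (N + 1 - i - 1),
        if a + (i : ZMod m) * d₂ + ((j : ZMod m) + 1) * d₁ = y - (d₂ - d₁) then 1 else 0)
      = ∑ i ∈ range N, ∑ j ∈ range (N - i),
          if a + ((i : ZMod m) + 1) * d₂ + (j : ZMod m) * d₁ = y then 1 else 0 := by
    rw [Finset.sum_range_succ]
    have hlast : (∑ j ∈ range (N + 1 - N - 1),
        if a + (N : ZMod m) * d₂ + ((j : ZMod m) + 1) * d₁ = y - (d₂ - d₁) then 1 else 0)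
          = 0 := by
      have h0 : N + 1 - N - 1 = 0 := by omega
      rw [h0]; simp
    rw [hlast, add_zero]
    apply Finset.sum_congr rfl
    intro i hi
    rw [mem_range] at hi
    have hrange : N + 1 - i - 1 = N - i := by omega
    rw [hrange]
    apply Finset.sum_congr rfl
    intro j _
    apply ifcongr
    constructor
    · intro h; linear_combination h
    · intro h; linear_combination h
  have hbound : (∑ i ∈ range (N + 1), if a + (i : ZMod m) * d₂ = y - (d₂ - d₁) then 1 else 0)
      = ∑ j ∈ range (N + 1), if a + (j : ZMod m) * d₁ = y then 1 else 0 := by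
    have h1 : (∑ i ∈ range (N + 1), if a + (i : ZMod m) * d₂ = y - (d₂ - d₁) then 1 else 0)
        = ∑ i ∈ range (N + 1), if ((i : ZMod m) + 1) * d₂ = (y - a) + d₁ then 1 else 0 := by
      apply Finset.sum_congr rfl
      intro i _
      apply ifcongr
      constructor
      · intro h; linear_combination h
      · intro h; linear_combination h
    have h2 : (∑ j ∈ range (N + 1), if a + (j : ZMod m) * d₁ = y then 1 else 0)
        = ∑ j ∈ range (N + 1), if (j : ZMod m) * d₁ = y - a then 1 else 0 := by
      apply Finset.sum_congr rfl
      intro j _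
      apply ifcongr
      constructor
      · intro h; linear_combination h
      · intro h; linear_combination h
    rw [h1, h2]
    exact key_count d₁ d₂ hg (N + 1) hmod (y - a)
  rw [claimB (y - (d₂ - d₁)), claimC, claimA y, hbound]

private lemma iter_step [NeZero m] (a d₁ d₂ : ZMod m)
    (hg : Nat.gcd (ZMod.val d₁) m = Nat.gcd (ZMod.val d₂) m)
    (n : ℕ) (hn : 0 < n)
    (hmod : m / Nat.gcd (ZMod.val d₁) m ∣ n ∨ m / Nat.gcd (ZMod.val d₁) m ∣ (n + 1))
    (k : ℕ) : ∀ x : ZMod m,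
    S m a d₁ d₂ n (x + (k : ZMod m) * (d₂ - d₁)) = S m a d₁ d₂ n x := by
  induction k with
  | zero => intro x; simp
  | succ k ih =>
    intro x
    have h1 : x + ((k + 1 : ℕ) : ZMod m) * (d₂ - d₁)
        = (x + (d₂ - d₁)) + (k : ZMod m) * (d₂ - d₁) := by push_cast; ring
    rw [h1, ih]
    have h2 := step a d₁ d₂ hg n hn hmod (x + (d₂ - d₁))
    rw [add_sub_cancel_right] at h2
    exact h2.symm

end Main

/-- For the arithmetic triangle `∇ = (a + i·d₂ + j·d₁)_{i+j<n}` over `ℤ/mℤ`, with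
`gcd(d₁,m) = gcd(d₂,m)` and `n ≡ 0` or `-1 (mod m/gcd(d₁,m))`, the multiplicity
function satisfies `mult(x + gcd(d₂-d₁,m)) = mult(x)` for all `x`. -/
theorem arith_triangle_shift (m : ℕ) (hm : 0 < m) (a d₁ d₂ : ZMod m)
    (hg : Nat.gcd (ZMod.val d₁) m = Nat.gcd (ZMod.val d₂) m)
    (n : ℕ) (hn : 0 < n)
    (hmod : m / Nat.gcd (ZMod.val d₁) m ∣ n ∨ m / Nat.gcd (ZMod.val d₁) m ∣ (n + 1)) :
    ∀ x : ZMod m,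
      (∑ i ∈ Finset.range n, ∑ j ∈ Finset.range (n - i),
          if a + (i : ZMod m) * d₂ + (j : ZMod m) * d₁ =
              x + (Nat.gcd (ZMod.val (d₂ - d₁)) m : ZMod m) then 1 else 0) =
        ∑ i ∈ Finset.range n, ∑ j ∈ Finset.range (n - i),
          if a + (i : ZMod m) * d₂ + (j : ZMod m) * d₁ = x then 1 else 0 := by
  haveI : NeZero m := ⟨hm.ne'⟩
  intro x
  have hgcd : ((Nat.gcd (d₂ - d₁).val m : ℕ) : ZMod m)
      = (((Nat.gcdA (d₂ - d₁).val m : ZMod m)).val : ZMod m) * (d₂ - d₁) := by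
    rw [gcd_cast_eq m (d₂ - d₁).val, ZMod.natCast_zmod_val, ZMod.natCast_zmod_val]
  have key : S m a d₁ d₂ n (x + ((Nat.gcd (d₂ - d₁).val m : ℕ) : ZMod m)) = S m a d₁ d₂ n x := by
    rw [hgcd]
    exact iter_step a d₁ d₂ hg n hn hmod ((Nat.gcdA (d₂ - d₁).val m : ZMod m)).val x
  exact key
end

section
/- Let m be an odd positive integer and a, d₁, d₂ ∈ ℤ/mℤ such that d₁, d₂, and d₂ - d₁ are all invertible in ℤ/mℤ. Then the arithmetic triangle AT(a, d₁, d₂, n) = (a + i·d₂ + j·d₁)_{i+j<n} is balanced in ℤ/mℤ for every non-negative integer n with n ≡ 0 or n ≡ -1 (mod m). -/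
open Finset

private lemma sum_block (m : ℕ) (f : ℕ → ℕ) (q : ℕ) :
    ∑ i ∈ range (q * m), f i = ∑ s ∈ range q, ∑ u ∈ range m, f (m * s + u) := by
  induction q with
  | zero => simp
  | succ q ih =>
    rw [sum_range_succ, ← ih, show (q+1) * m = q * m + m by ring, Finset.range_eq_Ico,
      ← Finset.sum_Ico_consecutive f (Nat.zero_le (q*m)) (Nat.le_add_right (q*m) m),
      ← Finset.range_eq_Ico, Finset.sum_Ico_eq_sum_range]
    simp [mul_comm]

private def vfun (m : ℕ) [NeZero m] (b : ZMod m) (e : (ZMod m)ˣ) (u : ℕ) : ℕ :=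
  (b + (u : ZMod m) * (e : ZMod m)).val

private lemma perm_sum (m : ℕ) [NeZero m] (b : ZMod m) (e : (ZMod m)ˣ) (F : ℕ → ℕ) :
    ∑ u ∈ range m, F (vfun m b e u) = ∑ u ∈ range m, F u := by
  unfold vfun
  refine Finset.sum_nbij' (i := fun u => (b + (u : ZMod m) * (e : ZMod m)).val)
    (j := fun u => (((u : ZMod m) - b) * ((e⁻¹ : (ZMod m)ˣ) : ZMod m)).val) ?_ ?_ ?_ ?_ ?_
  · intro u hu; simp [ZMod.val_lt]
  · intro u hu; simp [ZMod.val_lt]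
  · intro u hu
    have h1 : (((b + (u : ZMod m) * (e : ZMod m)).val : ℕ) : ZMod m) = b + (u : ZMod m) * e :=
      ZMod.natCast_rightInverse _
    rw [h1, add_sub_cancel_left, mul_assoc, Units.mul_inv, mul_one,
      ZMod.val_cast_of_lt (mem_range.mp hu)]
  · intro u hu
    have h1 : (((((u : ZMod m) - b) * ((e⁻¹ : (ZMod m)ˣ) : ZMod m)).val : ℕ) : ZMod m)
        = ((u : ZMod m) - b) * ((e⁻¹ : (ZMod m)ˣ) : ZMod m) := ZMod.natCast_rightInverse _
    rw [h1, mul_assoc, Units.inv_mul, mul_one, add_sub_cancel,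
      ZMod.val_cast_of_lt (mem_range.mp hu)]
  · intro u hu; rfl

private lemma cond_iff (m q n θ : ℕ) (hq : 1 ≤ q)
    (hcase : (n = q * m ∧ θ = m) ∨ (n + 1 = q * m ∧ θ + 1 = m))
    (s t u v : ℕ) (hu : u < m) (hv : v < m) :
    (m * s + u + (m * t + v) < n ↔ s + t < q - 1 + (if u + v < θ then 1 else 0)) := by
  have e1 : m * s + u + (m * t + v) = m * (s + t) + (u + v) := by ring
  have h1 : s + t + 1 ≤ q → m * (s + t) + m ≤ m * q := by
    intro h
    calc m * (s + t) + m = m * (s + t + 1) := by ring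
    _ ≤ m * q := Nat.mul_le_mul_left m h
  have h2 : q ≤ s + t → m * q ≤ m * (s + t) := fun h => Nat.mul_le_mul_left m h
  have h2' : q ≤ s + t + 1 → m * q ≤ m * (s + t) + m := by
    intro h
    calc m * q ≤ m * (s + t + 1) := Nat.mul_le_mul_left m h
    _ = m * (s + t) + m := by ring
  have h3 : s + t + 2 ≤ q → m * (s + t) + 2 * m ≤ m * q := by
    intro h
    calc m * (s + t) + 2 * m = m * (s + t + 2) := by ring
    _ ≤ m * q := Nat.mul_le_mul_left m h
  have hcase' : (n = m * q ∧ θ = m) ∨ (n + 1 = m * q ∧ θ + 1 = m) := by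
    rw [mul_comm]; exact hcase
  clear hcase
  rw [e1]; clear e1
  generalize hA : m * (s + t) = A at h1 h2 h2' h3 ⊢
  generalize hB : m * q = B at h1 h2 h2' h3 hcase' ⊢
  by_cases huv : u + v < θ <;> simp only [huv, if_pos, if_neg, not_false_iff] <;> omega

private def cnt (q r : ℕ) : ℕ := ∑ s ∈ range q, ∑ t ∈ range q, if s + t < r then 1 else 0

private lemma cnt_mono (q : ℕ) : cnt q (q - 1) ≤ cnt q q := by
  unfold cnt
  refine Finset.sum_le_sum fun s _ => Finset.sum_le_sum fun t _ => ?_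
  split <;> split <;> omega

private lemma countA (m : ℕ) [NeZero m] (hm : 0 < m) (θ : ℕ) (hθ : θ = m ∨ θ + 1 = m)
    (b : ZMod m) (e f : (ZMod m)ˣ)
    (hmod : ∀ u, u < m → (u + vfun m b e u) % m = vfun m b f u) :
    m * (∑ u ∈ range m, if u + vfun m b e u < θ then 1 else 0) + (∑ u ∈ range m, u)
      + (if θ = m then 0 else m) = m * m := by
  have hVlt : ∀ u, vfun m b e u < m := fun u => ZMod.val_lt _
  have hWlt : ∀ u, vfun m b f u < m := fun u => ZMod.val_lt _
  have hsumv : ∑ u ∈ range m, vfun m b e u = ∑ u ∈ range m, u := perm_sum m b e (fun k => k)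
  have hsumw : ∑ u ∈ range m, vfun m b f u = ∑ u ∈ range m, u := perm_sum m b f (fun k => k)
  have hdec : ∀ u, u < m →
      (u + vfun m b e u < m → vfun m b f u = u + vfun m b e u) ∧
      (m ≤ u + vfun m b e u → u + vfun m b e u = vfun m b f u + m) := by
    intro u hu
    have h1 := hmod u hu
    have h2 := hVlt u
    constructor
    · intro h
      rw [← h1, Nat.mod_eq_of_lt h]
    · intro h
      have h' : (u + vfun m b e u) % m = u + vfun m b e u - m := by
        rw [Nat.mod_eq_sub_mod h, Nat.mod_eq_of_lt (by omega)]
      omega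
  -- m * Bc = ∑ u
  have hBc : m * (∑ u ∈ range m, if m ≤ u + vfun m b e u then 1 else 0)
      = ∑ u ∈ range m, u := by
    have step : ∑ u ∈ range m, (u + vfun m b e u)
        = (∑ u ∈ range m, vfun m b f u)
          + m * (∑ u ∈ range m, if m ≤ u + vfun m b e u then 1 else 0) := by
      rw [Finset.mul_sum, ← Finset.sum_add_distrib]
      refine sum_congr rfl fun u hu => ?_
      have hu' := mem_range.mp hu
      have hd := hdec u hu'
      by_cases h : m ≤ u + vfun m b e u
      · rw [if_pos h, mul_one]
        have := hd.2 h
        omega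
      · rw [if_neg h, mul_zero, add_zero]
        exact (hd.1 (by omega)).symm
    rw [Finset.sum_add_distrib, hsumv, hsumw] at step
    exact (Nat.add_left_cancel step).symm
  obtain hθ' | hθ' := hθ
  · rw [hθ']
    rw [if_pos rfl, add_zero]
    have hAB : (∑ u ∈ range m, if u + vfun m b e u < m then 1 else 0)
        + (∑ u ∈ range m, if m ≤ u + vfun m b e u then 1 else 0) = m := by
      rw [← Finset.sum_add_distrib]
      calc ∑ u ∈ range m, ((if u + vfun m b e u < m then 1 else 0)
            + (if m ≤ u + vfun m b e u then 1 else 0))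
          = ∑ u ∈ range m, 1 := by
            refine sum_congr rfl fun u _ => ?_
            split <;> split <;> omega
        _ = m := by simp
    have := congrArg (m * ·) hAB
    simp only [Nat.mul_add] at this
    rw [hBc] at this
    exact this
  · rw [if_neg (by omega)]
    have hC : (∑ u ∈ range m, if vfun m b f u = m - 1 then 1 else 0) = 1 := by
      rw [perm_sum m b f (fun k => if k = m - 1 then 1 else 0),
        Finset.sum_ite_eq' (range m) (m - 1) (fun _ => (1:ℕ))]
      simp [mem_range.mpr (by omega : m - 1 < m)]
    have hABC : (∑ u ∈ range m, if u + vfun m b e u < θ then 1 else 0)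
        + (∑ u ∈ range m, if m ≤ u + vfun m b e u then 1 else 0)
        + (∑ u ∈ range m, if vfun m b f u = m - 1 then 1 else 0) = m := by
      rw [← Finset.sum_add_distrib, ← Finset.sum_add_distrib]
      calc ∑ u ∈ range m, ((if u + vfun m b e u < θ then 1 else 0)
            + (if m ≤ u + vfun m b e u then 1 else 0)
            + (if vfun m b f u = m - 1 then 1 else 0))
          = ∑ u ∈ range m, 1 := by
            refine sum_congr rfl fun u hu => ?_
            have hu' := mem_range.mp hu
            have hd := hdec u hu'
            have h2 := hVlt u
            have h3 := hWlt u
            rcases le_or_gt m (u + vfun m b e u) with h | h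
            · have := hd.2 h
              rw [if_neg (by omega), if_pos h, if_neg (by omega)]
            · have := hd.1 h
              by_cases h4 : u + vfun m b e u < θ
              · rw [if_pos h4, if_neg (by omega), if_neg (by omega)]
              · rw [if_neg h4, if_neg (by omega), if_pos (by omega)]
        _ = m := by simp
    rw [hC] at hABC
    have := congrArg (m * ·) hABC
    simp only [Nat.mul_add, Nat.mul_one] at this
    rw [hBc] at this
    exact this

private lemma key (m : ℕ) [NeZero m] (d₁ d₂ : ZMod m)
    (e₁ e₂ e₃ : (ZMod m)ˣ) (he₁ : (e₁ : ZMod m) = d₁) (he₂ : (e₂ : ZMod m) = d₂)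
    (he₃ : (e₃ : ZMod m) = d₂ - d₁)
    (n q θ : ℕ) (hq : 1 ≤ q)
    (hcase : (n = q * m ∧ θ = m) ∨ (n + 1 = q * m ∧ θ + 1 = m))
    (x y : ZMod m) :
    (∑ i ∈ range n, ∑ j ∈ range (n - i),
        if (i : ZMod m) * d₂ + (j : ZMod m) * d₁ = x then 1 else 0)
      = (∑ i ∈ range n, ∑ j ∈ range (n - i),
        if (i : ZMod m) * d₂ + (j : ZMod m) * d₁ = y then 1 else 0) := by
  have hm : 0 < m := Nat.pos_of_ne_zero (NeZero.ne m)
  have hinv : d₁ * ((e₁⁻¹ : (ZMod m)ˣ) : ZMod m) = 1 := by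
    rw [← he₁]; exact e₁.mul_inv
  have hnle : n ≤ q * m := by rcases hcase with ⟨h,_⟩|⟨h,_⟩ <;> omega
  have hVlt : ∀ (z : ZMod m) (u : ℕ), vfun m (z * ((e₁⁻¹ : (ZMod m)ˣ) : ZMod m)) (-(e₂ * e₁⁻¹)) u < m :=
    fun z u => ZMod.val_lt _
  have hWlt : ∀ (z : ZMod m) (u : ℕ), vfun m (z * ((e₁⁻¹ : (ZMod m)ˣ) : ZMod m)) (-(e₃ * e₁⁻¹)) u < m :=
    fun z u => ZMod.val_lt _
  -- the equation characterizes v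
  have hEv : ∀ (z : ZMod m) (u v : ℕ), v < m →
      (((u : ZMod m) * d₂ + (v : ZMod m) * d₁ = z) ↔
        v = vfun m (z * ((e₁⁻¹ : (ZMod m)ˣ) : ZMod m)) (-(e₂ * e₁⁻¹)) u) := by
    intro z u v hv
    have hne : ((-(e₂ * e₁⁻¹) : (ZMod m)ˣ) : ZMod m) = -(d₂ * ((e₁⁻¹ : (ZMod m)ˣ) : ZMod m)) := by
      rw [Units.val_neg, Units.val_mul, he₂]
    constructor
    · intro h
      have hv2 : (v : ZMod m) = z * ((e₁⁻¹ : (ZMod m)ˣ) : ZMod m)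
          + (u : ZMod m) * ((-(e₂ * e₁⁻¹) : (ZMod m)ˣ) : ZMod m) := by
        rw [hne]
        linear_combination ((e₁⁻¹ : (ZMod m)ˣ) : ZMod m) * h - (v : ZMod m) * hinv
      have := congrArg ZMod.val hv2
      rwa [ZMod.val_cast_of_lt hv] at this
    · intro h
      have hcv : (v : ZMod m) = z * ((e₁⁻¹ : (ZMod m)ˣ) : ZMod m)
          + (u : ZMod m) * ((-(e₂ * e₁⁻¹) : (ZMod m)ˣ) : ZMod m) := by
        rw [h]; exact ZMod.natCast_rightInverse _
      rw [hne] at hcv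
      linear_combination d₁ * hcv + (z - (u : ZMod m) * d₂) * hinv
  have main : ∀ z : ZMod m,
      (∑ i ∈ range n, ∑ j ∈ range (n - i),
        if (i : ZMod m) * d₂ + (j : ZMod m) * d₁ = z then 1 else 0)
      = m * cnt q (q - 1)
        + (∑ u ∈ range m,
            if u + vfun m (z * ((e₁⁻¹ : (ZMod m)ˣ) : ZMod m)) (-(e₂ * e₁⁻¹)) u < θ
            then 1 else 0)
          * (cnt q q - cnt q (q - 1)) := by
    intro z
    have c1 : (∑ i ∈ range n, ∑ j ∈ range (n - i),
        if (i : ZMod m) * d₂ + (j : ZMod m) * d₁ = z then 1 else 0)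
        = ∑ i ∈ range (q * m), ∑ j ∈ range (q * m),
            if i + j < n ∧ ((i : ZMod m) * d₂ + (j : ZMod m) * d₁ = z) then 1 else 0 := by
      rw [← Finset.sum_subset (Finset.range_subset_range.mpr hnle)
        (fun i hi hni => Finset.sum_eq_zero fun j _ => by
          rw [if_neg]
          rintro ⟨h, -⟩
          simp only [mem_range, not_lt] at hni
          omega)]
      refine sum_congr rfl fun i hi => ?_
      have hi' := mem_range.mp hi
      rw [← Finset.sum_subset (Finset.range_subset_range.mpr (show n - i ≤ q * m by omega))
        (fun j hj hnj => by
          rw [if_neg]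
          rintro ⟨h, -⟩
          simp only [mem_range, not_lt] at hnj
          omega)]
      refine sum_congr rfl fun j hj => ?_
      have hj' := mem_range.mp hj
      have hcnd : i + j < n := by omega
      by_cases hE : ((i : ZMod m) * d₂ + (j : ZMod m) * d₁ = z) <;> simp [hE, hcnd]
    have c2 : (∑ i ∈ range (q * m), ∑ j ∈ range (q * m),
            if i + j < n ∧ ((i : ZMod m) * d₂ + (j : ZMod m) * d₁ = z) then 1 else 0)
        = ∑ s ∈ range q, ∑ u ∈ range m, ∑ t ∈ range q, ∑ v ∈ range m,
            if (m * s + u) + (m * t + v) < n ∧ ((u : ZMod m) * d₂ + (v : ZMod m) * d₁ = z)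
            then 1 else 0 := by
      rw [sum_block m _ q]
      refine sum_congr rfl fun s _ => sum_congr rfl fun u _ => ?_
      rw [sum_block m _ q]
      refine sum_congr rfl fun t _ => sum_congr rfl fun v _ => ?_
      have hcast : ∀ a b : ℕ, ((m * a + b : ℕ) : ZMod m) = (b : ZMod m) := by
        intro a b; push_cast [ZMod.natCast_self]; ring
      rw [hcast, hcast]
    have c3 : ∀ s u t : ℕ, u < m →
        (∑ v ∈ range m,
            if (m * s + u) + (m * t + v) < n ∧ ((u : ZMod m) * d₂ + (v : ZMod m) * d₁ = z)
            then 1 else 0)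
        = if s + t < q - 1 +
            (if u + vfun m (z * ((e₁⁻¹ : (ZMod m)ˣ) : ZMod m)) (-(e₂ * e₁⁻¹)) u < θ
             then 1 else 0) then 1 else 0 := by
      intro s u t hu
      have hVm : vfun m (z * ((e₁⁻¹ : (ZMod m)ˣ) : ZMod m)) (-(e₂ * e₁⁻¹)) u < m := hVlt z u
      calc (∑ v ∈ range m,
            if (m * s + u) + (m * t + v) < n ∧ ((u : ZMod m) * d₂ + (v : ZMod m) * d₁ = z)
            then 1 else 0)
          = ∑ v ∈ range m,
              if v = vfun m (z * ((e₁⁻¹ : (ZMod m)ˣ) : ZMod m)) (-(e₂ * e₁⁻¹)) u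
              then (if (m * s + u) + (m * t + v) < n then (1:ℕ) else 0) else 0 := by
            refine sum_congr rfl fun v hv => ?_
            have hv' := mem_range.mp hv
            by_cases hveq : v = vfun m (z * ((e₁⁻¹ : (ZMod m)ˣ) : ZMod m)) (-(e₂ * e₁⁻¹)) u
            · subst hveq
              have hE := (hEv z u _ hv').mpr rfl
              simp [hE]
            · have hE : ¬ ((u : ZMod m) * d₂ + (v : ZMod m) * d₁ = z) :=
                fun h => hveq ((hEv z u v hv').mp h)
              simp [hveq, hE]
        _ = if (m * s + u) +
              (m * t + vfun m (z * ((e₁⁻¹ : (ZMod m)ˣ) : ZMod m)) (-(e₂ * e₁⁻¹)) u) < n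
            then 1 else 0 := by
            rw [Finset.sum_ite_eq' (range m)]
            simp [mem_range.mpr hVm]
        _ = _ := by
            simp only [cond_iff m q n θ hq hcase s t u _ hu hVm]
    rw [c1, c2]
    calc (∑ s ∈ range q, ∑ u ∈ range m, ∑ t ∈ range q, ∑ v ∈ range m,
            if (m * s + u) + (m * t + v) < n ∧ ((u : ZMod m) * d₂ + (v : ZMod m) * d₁ = z)
            then 1 else 0)
        = ∑ s ∈ range q, ∑ u ∈ range m, ∑ t ∈ range q,
            (if s + t < q - 1 +
              (if u + vfun m (z * ((e₁⁻¹ : (ZMod m)ˣ) : ZMod m)) (-(e₂ * e₁⁻¹)) u < θ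
               then 1 else 0) then 1 else 0) := by
          refine sum_congr rfl fun s _ => sum_congr rfl fun u hu => sum_congr rfl fun t _ => ?_
          exact c3 s u t (mem_range.mp hu)
      _ = ∑ u ∈ range m, ∑ s ∈ range q, ∑ t ∈ range q,
            (if s + t < q - 1 +
              (if u + vfun m (z * ((e₁⁻¹ : (ZMod m)ˣ) : ZMod m)) (-(e₂ * e₁⁻¹)) u < θ
               then 1 else 0) then 1 else 0) := Finset.sum_comm
      _ = ∑ u ∈ range m, cnt q (q - 1 +
            (if u + vfun m (z * ((e₁⁻¹ : (ZMod m)ˣ) : ZMod m)) (-(e₂ * e₁⁻¹)) u < θ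
             then 1 else 0)) := rfl
      _ = ∑ u ∈ range m, (cnt q (q - 1) +
            (if u + vfun m (z * ((e₁⁻¹ : (ZMod m)ˣ) : ZMod m)) (-(e₂ * e₁⁻¹)) u < θ
             then 1 else 0) * (cnt q q - cnt q (q - 1))) := by
          refine sum_congr rfl fun u _ => ?_
          by_cases hb : u + vfun m (z * ((e₁⁻¹ : (ZMod m)ˣ) : ZMod m)) (-(e₂ * e₁⁻¹)) u < θ
          · rw [if_pos hb, show q - 1 + 1 = q by omega]
            have := cnt_mono q
            omega
          · rw [if_neg hb]
            simp
      _ = m * cnt q (q - 1)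
          + (∑ u ∈ range m,
              if u + vfun m (z * ((e₁⁻¹ : (ZMod m)ˣ) : ZMod m)) (-(e₂ * e₁⁻¹)) u < θ
              then 1 else 0) * (cnt q q - cnt q (q - 1)) := by
          rw [Finset.sum_add_distrib, Finset.sum_const, card_range, smul_eq_mul, ← Finset.sum_mul]
  rw [main x, main y]
  have hθ : θ = m ∨ θ + 1 = m := by
    rcases hcase with ⟨_, h⟩ | ⟨_, h⟩
    exacts [Or.inl h, Or.inr h]
  have hW : ∀ (z : ZMod m), ∀ u, u < m →
      (u + vfun m (z * ((e₁⁻¹ : (ZMod m)ˣ) : ZMod m)) (-(e₂ * e₁⁻¹)) u) % m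
        = vfun m (z * ((e₁⁻¹ : (ZMod m)ˣ) : ZMod m)) (-(e₃ * e₁⁻¹)) u := by
    intro z u hu
    have hcast1 : ((vfun m (z * ((e₁⁻¹ : (ZMod m)ˣ) : ZMod m)) (-(e₂ * e₁⁻¹)) u : ℕ) : ZMod m)
        = z * ((e₁⁻¹ : (ZMod m)ˣ) : ZMod m)
          + (u : ZMod m) * ((-(e₂ * e₁⁻¹) : (ZMod m)ˣ) : ZMod m) :=
      ZMod.natCast_rightInverse _
    have hkey : ((u + vfun m (z * ((e₁⁻¹ : (ZMod m)ˣ) : ZMod m)) (-(e₂ * e₁⁻¹)) u : ℕ) : ZMod m)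
        = z * ((e₁⁻¹ : (ZMod m)ˣ) : ZMod m)
          + (u : ZMod m) * ((-(e₃ * e₁⁻¹) : (ZMod m)ˣ) : ZMod m) := by
      push_cast [hcast1]
      rw [he₂, he₃]
      linear_combination -(u : ZMod m) * hinv
    calc (u + vfun m (z * ((e₁⁻¹ : (ZMod m)ˣ) : ZMod m)) (-(e₂ * e₁⁻¹)) u) % m
        = ((u + vfun m (z * ((e₁⁻¹ : (ZMod m)ˣ) : ZMod m)) (-(e₂ * e₁⁻¹)) u : ℕ) : ZMod m).val :=
          (ZMod.val_natCast m _).symm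
      _ = _ := by rw [hkey]; rfl
  have h1 := countA m hm θ hθ (x * ((e₁⁻¹ : (ZMod m)ˣ) : ZMod m)) (-(e₂ * e₁⁻¹)) (-(e₃ * e₁⁻¹)) (hW x)
  have h2 := countA m hm θ hθ (y * ((e₁⁻¹ : (ZMod m)ˣ) : ZMod m)) (-(e₂ * e₁⁻¹)) (-(e₃ * e₁⁻¹)) (hW y)
  have h3 := h1.trans h2.symm
  have h4 := Nat.add_right_cancel h3
  have h5 := Nat.add_right_cancel h4
  have h6 := Nat.eq_of_mul_eq_mul_left hm h5
  rw [h6]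

/-- For odd `m` and `d₁, d₂, d₂-d₁` all invertible in `ℤ/mℤ`, the arithmetic
triangle `AT(a,d₁,d₂,n) = (a + i·d₂ + j·d₁)_{i+j<n}` is balanced for every
`n ≡ 0` or `-1 (mod m)`. -/
theorem arith_triangle_balanced (m : ℕ) (hm : 0 < m) (hodd : Odd m)
    (a d₁ d₂ : ZMod m) (h1 : IsUnit d₁) (h2 : IsUnit d₂) (h3 : IsUnit (d₂ - d₁))
    (n : ℕ) (hmod : m ∣ n ∨ m ∣ (n + 1)) :
    ∀ x y : ZMod m,
      (∑ i ∈ Finset.range n, ∑ j ∈ Finset.range (n - i),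
          if a + (i : ZMod m) * d₂ + (j : ZMod m) * d₁ = x then 1 else 0) =
        ∑ i ∈ Finset.range n, ∑ j ∈ Finset.range (n - i),
          if a + (i : ZMod m) * d₂ + (j : ZMod m) * d₁ = y then 1 else 0 := by
  intro x y
  by_cases hn0 : n = 0
  · subst hn0; simp
  haveI : NeZero m := ⟨hm.ne'⟩
  obtain ⟨e₁, he₁⟩ := h1
  obtain ⟨e₂, he₂⟩ := h2
  obtain ⟨e₃, he₃⟩ := h3
  have hsh : ∀ (z : ZMod m) (i j : ℕ),
      (a + (i : ZMod m) * d₂ + (j : ZMod m) * d₁ = z) ↔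
        ((i : ZMod m) * d₂ + (j : ZMod m) * d₁ = z - a) := by
    intro z i j
    constructor <;> intro h <;> linear_combination h
  simp only [hsh]
  rcases hmod with ⟨q, hq⟩ | ⟨q, hq⟩
  · have hq1 : 1 ≤ q := by
      rcases Nat.eq_zero_or_pos q with h | h
      · subst h; omega
      · exact h
    exact key m d₁ d₂ e₁ e₂ e₃ he₁ he₂ he₃ n q m hq1 (Or.inl ⟨by rw [hq, Nat.mul_comm], rfl⟩) (x - a) (y - a)
  · have hq1 : 1 ≤ q := by
      rcases Nat.eq_zero_or_pos q with h | h
      · subst h; omega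
      · exact h
    exact key m d₁ d₂ e₁ e₂ e₃ he₁ he₂ he₃ n q (m - 1) hq1
      (Or.inr ⟨by rw [hq, Nat.mul_comm], by omega⟩) (x - a) (y - a)
end

section
/- Let a, d₁, d₂ ∈ ℤ/mℤ (m ≥ 2) and n ≥ 1. If the arithmetic triangle AT(a, d₁, d₂, n) = (a + i·d₂ + j·d₁)_{i+j<n} is balanced in ℤ/mℤ, then d₁, d₂ and d₂ - d₁ are all invertible in ℤ/mℤ. In particular, if m is even, no arithmetic triangle over ℤ/mℤ is balanced. -/
open Finset

private lemma tri_swap (n : ℕ) (g : ℕ → ℕ → ℕ) :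
    ∑ i ∈ range n, ∑ j ∈ range (n - i), g i j
      = ∑ j ∈ range n, ∑ i ∈ range (n - j), g i j := by
  have h : ∀ (g : ℕ → ℕ → ℕ) (i : ℕ),
      ∑ j ∈ range (n - i), g i j = ∑ j ∈ range n, if i + j < n then g i j else 0 := by
    intro g i
    rw [← Finset.sum_filter]
    apply Finset.sum_congr
    · ext j; simp [Finset.mem_range, Finset.mem_filter]; omega
    · intros; rfl
  calc ∑ i ∈ range n, ∑ j ∈ range (n - i), g i j
      = ∑ i ∈ range n, ∑ j ∈ range n, if i + j < n then g i j else 0 := by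
        exact Finset.sum_congr rfl fun i _ => h g i
    _ = ∑ j ∈ range n, ∑ i ∈ range n, if i + j < n then g i j else 0 := Finset.sum_comm
    _ = ∑ j ∈ range n, ∑ i ∈ range (n - j), g i j := by
        refine Finset.sum_congr rfl fun j _ => ?_
        rw [h (fun j i => g i j) j]
        refine Finset.sum_congr rfl fun i _ => ?_
        simp [Nat.add_comm]

private lemma tri_diag (f : ℕ → ℕ) : ∀ n : ℕ,
    ∑ i ∈ range n, ∑ j ∈ range (n - i), f (i + j) = ∑ s ∈ range n, (s + 1) * f s := by
  intro n
  induction n with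
  | zero => simp
  | succ n ih =>
    rw [Finset.sum_range_succ (f := fun i => ∑ j ∈ range (n + 1 - i), f (i + j)),
        Finset.sum_range_succ (f := fun s => (s + 1) * f s)]
    have h1 : ∑ i ∈ range n, ∑ j ∈ range (n + 1 - i), f (i + j)
        = ∑ i ∈ range n, ((∑ j ∈ range (n - i), f (i + j)) + f n) := by
      refine Finset.sum_congr rfl fun i hi => ?_
      have hi' : i < n := Finset.mem_range.mp hi
      have h2 : n + 1 - i = (n - i) + 1 := by omega
      rw [h2, Finset.sum_range_succ]
      congr 2
      omega
    have h3 : n + 1 - n = 1 := by omega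
    rw [h1, Finset.sum_add_distrib, ih, Finset.sum_const, Finset.card_range, h3,
        Finset.sum_range_one, smul_eq_mul]
    simp only [Nat.add_zero]; ring

private lemma sum_cls01 (n p : ℕ) (hn : 0 < n) :
    ∑ i ∈ (range n).filter (fun i => i % p = 1), (n - i)
      < ∑ i ∈ (range n).filter (fun i => i % p = 0), (n - i) := by
  set A := (range n).filter (fun i => i % p = 1) with hA
  set B := (range n).filter (fun i => i % p = 0) with hB
  have h0B : 0 ∈ B := by simp [hB, Finset.mem_filter, hn]
  rcases A.eq_empty_or_nonempty with h | h
  · rw [h, Finset.sum_empty]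
    calc 0 < n - 0 := by omega
      _ ≤ ∑ i ∈ B, (n - i) := Finset.single_le_sum (fun _ _ => Nat.zero_le _) h0B
  · have hmem : ∀ i ∈ A, 1 ≤ i ∧ i < n ∧ i % p = 1 := by
      intro i hi
      simp only [hA, Finset.mem_filter, Finset.mem_range] at hi
      obtain ⟨h1, h2⟩ := hi
      refine ⟨?_, h1, h2⟩
      rcases Nat.eq_zero_or_pos i with rfl | h
      · simp at h2
      · exact h
    calc ∑ i ∈ A, (n - i) < ∑ i ∈ A, (n - (i - 1)) := by
          refine Finset.sum_lt_sum_of_nonempty h fun i hi => ?_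
          have := hmem i hi; omega
      _ = ∑ j ∈ A.image (fun i => i - 1), (n - j) := by
          rw [Finset.sum_image]
          intro i hi i' hi' hii'
          have := hmem i hi; have := hmem i' hi'; simp only at hii'; omega
      _ ≤ ∑ j ∈ B, (n - j) := by
          apply Finset.sum_le_sum_of_subset
          intro j hj
          simp only [Finset.mem_image] at hj
          obtain ⟨i, hi, rfl⟩ := hj
          obtain ⟨h1, h2, h3⟩ := hmem i hi
          simp only [hB, Finset.mem_filter, Finset.mem_range]
          constructor
          · omega
          · have hd := Nat.div_add_mod i p
            have : i - 1 = p * (i / p) := by omega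
            rw [this, Nat.mul_mod_right]

private lemma sum_cls12 (n p : ℕ) (hn : 2 ≤ n) (hp : 2 ≤ p) :
    ∑ s ∈ (range n).filter (fun s => s % p = (n - 2) % p), (s + 1)
      < ∑ s ∈ (range n).filter (fun s => s % p = (n - 1) % p), (s + 1) := by
  set A := (range n).filter (fun s => s % p = (n - 2) % p) with hA
  set B := (range n).filter (fun s => s % p = (n - 1) % p) with hB
  have hne : (n - 1) % p ≠ (n - 2) % p := by
    intro hmod
    have h1 : n - 2 ≡ n - 1 [MOD p] := hmod.symm
    have h2 := (Nat.modEq_iff_dvd' (by omega)).mp h1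
    have h3 : p ∣ 1 := by
      have h4 : n - 1 - (n - 2) = 1 := by omega
      rwa [h4] at h2
    have := Nat.le_of_dvd one_pos h3
    omega
  have hmem : ∀ s ∈ A, s < n - 1 ∧ s % p = (n - 2) % p := by
    intro s hs
    simp only [hA, Finset.mem_filter, Finset.mem_range] at hs
    refine ⟨?_, hs.2⟩
    rcases Nat.lt_or_ge s (n - 1) with h | h
    · exact h
    · exfalso
      have : s = n - 1 := by omega
      rw [this] at hs
      exact hne hs.2
  have hAne : A.Nonempty := ⟨n - 2, by simp [hA, Finset.mem_filter]; omega⟩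
  calc ∑ s ∈ A, (s + 1) < ∑ s ∈ A, (s + 2) := by
        refine Finset.sum_lt_sum_of_nonempty hAne fun s _ => by omega
    _ = ∑ t ∈ A.image (fun s => s + 1), (t + 1) := by
        rw [Finset.sum_image (by intro x _ y _ h; simp only at h; omega)]
    _ ≤ ∑ t ∈ B, (t + 1) := by
        apply Finset.sum_le_sum_of_subset
        intro t ht
        simp only [Finset.mem_image] at ht
        obtain ⟨s, hs, rfl⟩ := ht
        obtain ⟨h1, h2⟩ := hmem s hs
        simp only [hB, Finset.mem_filter, Finset.mem_range]
        refine ⟨by omega, ?_⟩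
        have h5 : s + 1 ≡ (n - 2) + 1 [MOD p] := Nat.ModEq.add_right 1 h2
        have h3 : n - 2 + 1 = n - 1 := by omega
        rwa [h3] at h5

private lemma conv_sum (n : ℕ) (w : ℕ → ℕ) (C : ℕ → Prop) [DecidablePred C] :
    ∑ i ∈ range n, w i * (if C i then 1 else 0) = ∑ i ∈ (range n).filter C, w i := by
  rw [Finset.sum_filter]
  exact Finset.sum_congr rfl fun i _ => by split <;> simp

private lemma key_s17 (p : ℕ) (hp : p.Prime) (n : ℕ) (hn2 : 2 ≤ n) (b e₁ e₂ : ZMod p)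
    (hconst : ∀ u v : ZMod p,
      (∑ i ∈ range n, ∑ j ∈ range (n - i),
          if b + (i : ZMod p) * e₂ + (j : ZMod p) * e₁ = u then 1 else 0) =
        ∑ i ∈ range n, ∑ j ∈ range (n - i),
          if b + (i : ZMod p) * e₂ + (j : ZMod p) * e₁ = v then 1 else 0) :
    e₁ ≠ 0 ∧ e₂ ≠ 0 ∧ e₂ - e₁ ≠ 0 := by
  haveI : Fact p.Prime := ⟨hp⟩
  have hp2 : 2 ≤ p := hp.two_le
  have hcast1 : ∀ i : ℕ, ((i : ZMod p) = 1) ↔ i % p = 1 := by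
    intro i
    have h1p : 1 % p = 1 := Nat.mod_eq_of_lt (by omega)
    rw [show (1 : ZMod p) = ((1 : ℕ) : ZMod p) by simp, ZMod.natCast_eq_natCast_iff]
    show i ≡ 1 [MOD p] ↔ _
    unfold Nat.ModEq
    rw [h1p]
  have hzero : ¬(e₂ = 0 ∧ e₁ = 0) := by
    rintro ⟨h2, h1⟩
    have h := hconst b (b + 1)
    have hL : (∑ i ∈ range n, ∑ j ∈ range (n - i),
        if b + (i : ZMod p) * e₂ + (j : ZMod p) * e₁ = b then 1 else 0)
        = ∑ i ∈ range n, (n - i) := by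
      refine Finset.sum_congr rfl fun i _ => ?_
      rw [h1, h2]
      simp
    have hR : (∑ i ∈ range n, ∑ j ∈ range (n - i),
        if b + (i : ZMod p) * e₂ + (j : ZMod p) * e₁ = b + 1 then 1 else 0) = 0 := by
      refine Finset.sum_eq_zero fun i _ => Finset.sum_eq_zero fun j _ => ?_
      rw [h1, h2]
      simp
    rw [hL, hR] at h
    have hpos : 0 < ∑ i ∈ range n, (n - i) := by
      calc 0 < n - 0 := by omega
        _ ≤ _ := Finset.single_le_sum (fun _ _ => Nat.zero_le _)
              (Finset.mem_range.mpr (by omega))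
    omega
  have he1 : e₁ ≠ 0 := by
    intro h1
    have h2 : e₂ ≠ 0 := fun h2 => hzero ⟨h2, h1⟩
    have h := hconst b (b + e₂)
    have key1 : ∀ (u : ZMod p) (C : ℕ → Prop) [DecidablePred C],
        (∀ i : ℕ, (b + (i : ZMod p) * e₂ = u) ↔ C i) →
        (∑ i ∈ range n, ∑ j ∈ range (n - i),
          if b + (i : ZMod p) * e₂ + (j : ZMod p) * e₁ = u then 1 else 0)
          = ∑ i ∈ (range n).filter C, (n - i) := by
      intro u C _ hC
      rw [← conv_sum n (fun i => n - i) C]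
      refine Finset.sum_congr rfl fun i _ => ?_
      rw [h1]
      simp only [mul_zero, add_zero, Finset.sum_const, Finset.card_range, smul_eq_mul]
      congr 1
      exact if_congr (hC i) rfl rfl
    rw [key1 b (fun i => i % p = 0) (fun i => by
          rw [add_eq_left, mul_eq_zero, or_iff_left h2,
              ZMod.natCast_eq_zero_iff, Nat.dvd_iff_mod_eq_zero]),
        key1 (b + e₂) (fun i => i % p = 1) (fun i => by
          rw [add_right_inj]
          constructor
          · intro hie
            exact (hcast1 i).mp (mul_right_cancel₀ h2 (by rwa [one_mul]))
          · intro hmod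
            rw [(hcast1 i).mpr hmod, one_mul])] at h
    have := sum_cls01 n p (by omega)
    omega
  have he2 : e₂ ≠ 0 := by
    intro h2
    have h := hconst b (b + e₁)
    rw [tri_swap n (fun i j =>
          if b + (i : ZMod p) * e₂ + (j : ZMod p) * e₁ = b then 1 else 0),
        tri_swap n (fun i j =>
          if b + (i : ZMod p) * e₂ + (j : ZMod p) * e₁ = b + e₁ then 1 else 0)] at h
    have key1 : ∀ (u : ZMod p) (C : ℕ → Prop) [DecidablePred C],
        (∀ j : ℕ, (b + (j : ZMod p) * e₁ = u) ↔ C j) →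
        (∑ j ∈ range n, ∑ i ∈ range (n - j),
          if b + (i : ZMod p) * e₂ + (j : ZMod p) * e₁ = u then 1 else 0)
          = ∑ j ∈ (range n).filter C, (n - j) := by
      intro u C _ hC
      rw [← conv_sum n (fun j => n - j) C]
      refine Finset.sum_congr rfl fun j _ => ?_
      rw [h2]
      simp only [mul_zero, add_zero, Finset.sum_const, Finset.card_range, smul_eq_mul]
      congr 1
      exact if_congr (hC j) rfl rfl
    rw [key1 b (fun j => j % p = 0) (fun j => by
          rw [add_eq_left, mul_eq_zero, or_iff_left he1,
              ZMod.natCast_eq_zero_iff, Nat.dvd_iff_mod_eq_zero]),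
        key1 (b + e₁) (fun j => j % p = 1) (fun j => by
          rw [add_right_inj]
          constructor
          · intro hje
            exact (hcast1 j).mp (mul_right_cancel₀ he1 (by rwa [one_mul]))
          · intro hmod
            rw [(hcast1 j).mpr hmod, one_mul])] at h
    have := sum_cls01 n p (by omega)
    omega
  refine ⟨he1, he2, ?_⟩
  intro hd
  have he : e₂ = e₁ := sub_eq_zero.mp hd
  have key2 : ∀ c : ℕ,
      (∑ i ∈ range n, ∑ j ∈ range (n - i),
        if b + (i : ZMod p) * e₂ + (j : ZMod p) * e₁ = b + (c : ZMod p) * e₁ then 1 else 0)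
        = ∑ s ∈ (range n).filter (fun s => s % p = c % p), (s + 1) := by
    intro c
    have step : (∑ i ∈ range n, ∑ j ∈ range (n - i),
        if b + (i : ZMod p) * e₂ + (j : ZMod p) * e₁ = b + (c : ZMod p) * e₁ then 1 else 0)
        = ∑ i ∈ range n, ∑ j ∈ range (n - i),
            (fun s => if s % p = c % p then (1 : ℕ) else 0) (i + j) := by
      refine Finset.sum_congr rfl fun i _ => Finset.sum_congr rfl fun j _ => ?_
      refine if_congr ?_ rfl rfl
      rw [he, add_assoc, add_right_inj, ← add_mul]
      constructor
      · intro hh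
        have h4 := mul_right_cancel₀ he1 hh
        have h3 : ((i + j : ℕ) : ZMod p) = ((c : ℕ) : ZMod p) := by push_cast; exact h4
        exact (ZMod.natCast_eq_natCast_iff _ _ _).mp h3
      · intro hh
        have h3 : ((i + j : ℕ) : ZMod p) = ((c : ℕ) : ZMod p) :=
          (ZMod.natCast_eq_natCast_iff _ _ _).mpr hh
        push_cast at h3
        rw [h3]
    rw [step]
    exact (tri_diag (fun s => if s % p = c % p then (1 : ℕ) else 0) n).trans
      (conv_sum n (fun s => s + 1) (fun s => s % p = c % p))
  have h := hconst (b + ((n - 1 : ℕ) : ZMod p) * e₁) (b + ((n - 2 : ℕ) : ZMod p) * e₁)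
  rw [key2 (n - 1), key2 (n - 2)] at h
  have := sum_cls12 n p hn2 hp2
  omega
private lemma reduction (m : ℕ) (hm : 2 ≤ m) (a d₁ d₂ : ZMod m) (n : ℕ) (hn2 : 2 ≤ n)
    (hbal : ∀ x y : ZMod m,
      (∑ i ∈ Finset.range n, ∑ j ∈ Finset.range (n - i),
          if a + (i : ZMod m) * d₂ + (j : ZMod m) * d₁ = x then 1 else 0) =
        ∑ i ∈ Finset.range n, ∑ j ∈ Finset.range (n - i),
          if a + (i : ZMod m) * d₂ + (j : ZMod m) * d₁ = y then 1 else 0)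
    (p : ℕ) (hp : p.Prime) (hpm : p ∣ m) :
    (ZMod.castHom hpm (ZMod p)) d₁ ≠ 0 ∧ (ZMod.castHom hpm (ZMod p)) d₂ ≠ 0 ∧
      (ZMod.castHom hpm (ZMod p)) d₂ - (ZMod.castHom hpm (ZMod p)) d₁ ≠ 0 := by
  haveI : NeZero m := ⟨by omega⟩
  haveI : Fact p.Prime := ⟨hp⟩
  set φ := ZMod.castHom hpm (ZMod p) with hφ
  apply key_s17 p hp n hn2 (φ a) (φ d₁) (φ d₂)
  have hNp : ∀ u : ZMod p,
      (∑ i ∈ range n, ∑ j ∈ range (n - i),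
          if φ a + (i : ZMod p) * φ d₂ + (j : ZMod p) * φ d₁ = u then 1 else 0)
        = (univ.filter fun x : ZMod m => φ x = u).card *
            (∑ i ∈ range n, ∑ j ∈ range (n - i),
              if a + (i : ZMod m) * d₂ + (j : ZMod m) * d₁ = a then 1 else 0) := by
    intro u
    have step1 : ∀ i j : ℕ,
        (if φ a + (i : ZMod p) * φ d₂ + (j : ZMod p) * φ d₁ = u then (1 : ℕ) else 0)
          = ∑ x ∈ univ.filter (fun x : ZMod m => φ x = u),
              if a + (i : ZMod m) * d₂ + (j : ZMod m) * d₁ = x then 1 else 0 := by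
      intro i j
      rw [Finset.sum_ite_eq]
      simp only [Finset.mem_filter, Finset.mem_univ, true_and, map_add, map_mul, map_natCast]
    calc (∑ i ∈ range n, ∑ j ∈ range (n - i),
            if φ a + (i : ZMod p) * φ d₂ + (j : ZMod p) * φ d₁ = u then 1 else 0)
        = ∑ i ∈ range n, ∑ j ∈ range (n - i),
            ∑ x ∈ univ.filter (fun x : ZMod m => φ x = u),
              if a + (i : ZMod m) * d₂ + (j : ZMod m) * d₁ = x then 1 else 0 :=
          Finset.sum_congr rfl fun i _ => Finset.sum_congr rfl fun j _ => step1 i j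
      _ = ∑ i ∈ range n, ∑ x ∈ univ.filter (fun x : ZMod m => φ x = u),
            ∑ j ∈ range (n - i),
              if a + (i : ZMod m) * d₂ + (j : ZMod m) * d₁ = x then 1 else 0 :=
          Finset.sum_congr rfl fun i _ => Finset.sum_comm
      _ = ∑ x ∈ univ.filter (fun x : ZMod m => φ x = u), ∑ i ∈ range n,
            ∑ j ∈ range (n - i),
              if a + (i : ZMod m) * d₂ + (j : ZMod m) * d₁ = x then 1 else 0 :=
          Finset.sum_comm
      _ = ∑ _x ∈ univ.filter (fun x : ZMod m => φ x = u),
            (∑ i ∈ range n, ∑ j ∈ range (n - i),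
              if a + (i : ZMod m) * d₂ + (j : ZMod m) * d₁ = a then 1 else 0) :=
          Finset.sum_congr rfl fun x _ => hbal x a
      _ = _ := by rw [Finset.sum_const, smul_eq_mul]
  have hcard : ∀ u v : ZMod p,
      (univ.filter fun x : ZMod m => φ x = u).card
        = (univ.filter fun x : ZMod m => φ x = v).card := by
    intro u v
    have hφt : φ (((v - u).val : ℕ) : ZMod m) = v - u := by
      rw [map_natCast, ZMod.natCast_val, ZMod.cast_id]
    apply Finset.card_bij' (fun x _ => x + (((v - u).val : ℕ) : ZMod m))
      (fun y _ => y - (((v - u).val : ℕ) : ZMod m))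
    · intro x hx
      simp only [Finset.mem_filter, Finset.mem_univ, true_and] at *
      rw [map_add, hφt, hx]
      ring
    · intro y hy
      simp only [Finset.mem_filter, Finset.mem_univ, true_and] at *
      rw [map_sub, hφt, hy]
      ring
    · intro x _
      ring
    · intro y _
      ring
  intro u v
  rw [hNp u, hNp v, hcard u v]

set_option maxHeartbeats 1000000 in
/-- If the arithmetic triangle `AT(a,d₁,d₂,n) = (a + i·d₂ + j·d₁)_{i+j<n}` over
`ℤ/mℤ` (`m ≥ 2`, `n ≥ 1`) is balanced, then `d₁`, `d₂` and `d₂-d₁` are all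
invertible; in particular `m` is not even. -/
theorem balanced_arith_triangle_units (m : ℕ) (hm : 2 ≤ m) (a d₁ d₂ : ZMod m)
    (n : ℕ) (hn : 0 < n)
    (hbal : ∀ x y : ZMod m,
      (∑ i ∈ Finset.range n, ∑ j ∈ Finset.range (n - i),
          if a + (i : ZMod m) * d₂ + (j : ZMod m) * d₁ = x then 1 else 0) =
        ∑ i ∈ Finset.range n, ∑ j ∈ Finset.range (n - i),
          if a + (i : ZMod m) * d₂ + (j : ZMod m) * d₁ = y then 1 else 0) :
    (IsUnit d₁ ∧ IsUnit d₂ ∧ IsUnit (d₂ - d₁)) ∧ ¬Even m := by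
  haveI : NeZero m := ⟨by omega⟩
  have hone : (1 : ZMod m) ≠ 0 := by
    haveI : Fact (1 < m) := ⟨hm⟩
    exact one_ne_zero
  have hn2 : 2 ≤ n := by
    by_contra hlt
    have hn1 : n = 1 := by omega
    subst hn1
    have h := hbal a (a + 1)
    simp only [Finset.sum_range_one, Nat.sub_zero, Nat.cast_zero, zero_mul, add_zero] at h
    have hne : a ≠ a + 1 := fun hh => hone (left_eq_add.mp hh)
    rw [if_true, if_neg hne] at h
    exact one_ne_zero h
  have getp : ∀ w : ZMod m, ¬ IsUnit w →
      ∃ p, p.Prime ∧ ∃ hpm : p ∣ m, (ZMod.castHom hpm (ZMod p)) w = 0 := by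
    intro w hw
    have hco : ¬ Nat.Coprime w.val m := by
      intro hco
      apply hw
      have h := (ZMod.isUnit_iff_coprime w.val m).mpr hco
      rwa [ZMod.natCast_val, ZMod.cast_id] at h
    obtain ⟨p, hp, hpd⟩ := Nat.exists_prime_and_dvd hco
    have hpm : p ∣ m := hpd.trans (Nat.gcd_dvd_right _ _)
    have hpw : p ∣ w.val := hpd.trans (Nat.gcd_dvd_left _ _)
    refine ⟨p, hp, hpm, ?_⟩
    have hφw : (ZMod.castHom hpm (ZMod p)) w = ((w.val : ℕ) : ZMod p) := by
      conv_lhs => rw [show w = ((w.val : ℕ) : ZMod m) by rw [ZMod.natCast_val, ZMod.cast_id]]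
      rw [map_natCast]
    rw [hφw, ZMod.natCast_eq_zero_iff]
    exact hpw
  have hu1 : IsUnit d₁ := by
    by_contra hw
    obtain ⟨p, hp, hpm, h0⟩ := getp d₁ hw
    exact (reduction m hm a d₁ d₂ n hn2 hbal p hp hpm).1 h0
  have hu2 : IsUnit d₂ := by
    by_contra hw
    obtain ⟨p, hp, hpm, h0⟩ := getp d₂ hw
    exact (reduction m hm a d₁ d₂ n hn2 hbal p hp hpm).2.1 h0
  have hud : IsUnit (d₂ - d₁) := by
    by_contra hw
    obtain ⟨p, hp, hpm, h0⟩ := getp _ hw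
    apply (reduction m hm a d₁ d₂ n hn2 hbal p hp hpm).2.2
    rw [← map_sub]
    exact h0
  refine ⟨⟨hu1, hu2, hud⟩, ?_⟩
  intro hev
  obtain ⟨k, hk⟩ := hev
  have h2m : 2 ∣ m := ⟨k, by omega⟩
  set ψ := ZMod.castHom h2m (ZMod 2) with hψ
  have u1 : IsUnit (ψ d₁) := hu1.map ψ
  have u2 : IsUnit (ψ d₂) := hu2.map ψ
  have ud : IsUnit (ψ d₂ - ψ d₁) := by
    rw [← map_sub]
    exact hud.map ψ
  have hval : ∀ x : ZMod 2, x = 0 ∨ x = 1 := by decide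
  have e1 : ψ d₁ = 1 := by
    rcases hval (ψ d₁) with h | h
    · rw [h] at u1; exact absurd rfl u1.ne_zero
    · exact h
  have e2 : ψ d₂ = 1 := by
    rcases hval (ψ d₂) with h | h
    · rw [h] at u2; exact absurd rfl u2.ne_zero
    · exact h
  rw [e1, e2, sub_self] at ud
  exact ud.ne_zero rfl
end

section
/- Let k be a positive integer, n a positive integer with Euclidean division n = qk + r (0 ≤ r < k), and let (u_{i,j})_{(i,j)∈ℕ×ℤ} be a (k,k)-interlaced doubly arithmetic progression over ℤ/mℤ with initial matrix A = (a_{i₀,j₀}), row-differences D₁ = (d¹_{i₀,j₀}) and column-differences D₂ = (d²_{i₀,j₀}). Then the triangle (u_{i,j})_{i+j<n} decomposes as the disjoint union over (i₀,j₀) ∈ {0,...,k-1}² of the subtriangles (u_{i₀+ik, j₀+jk})_{(i,j): i₀+ik+j₀+jk<n}, and each such subtriangle is the arithmetic triangle AT(u_{i₀,j₀}, d¹_{i₀,j₀}, d²_{i₀,j₀}, q+ε) where ε = 1 if i₀+j₀ ≤ r-1, ε = 0 if r ≤ i₀+j₀ ≤ k+r-1, and ε = -1 if i₀+j₀ ≥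 k+r. -/
/-!
Writing `a = i₀ + i k` and `b = j₀ + j k` with `i₀, j₀ < k` is Euclidean division, so the
residue classes modulo `k` split the triangle into the `k²` interlaced subtriangles. For a
fixed class put `s = i₀ + j₀ < 2k`; then `a + b < qk + r` reads `s + (i + j) k < qk + r`, and
since `0 ≤ s < 2k` and `0 ≤ r < k` this holds exactly when `i + j < q + ε`, where `ε` records
whether `s` falls below `r`, in `[r, k + r)`, or above. On each subtriangle the interlaced
progression is arithmetic by hypothesis.
-/

lemma Nat.div_eq_and_mod_eq_of_eq_add_mul {a k s t : ℕ} (hs : s < k) (h : a = s + t * k) :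
    a / k = t ∧ a % k = s :=
  (Nat.div_mod_unique (by omega)).mpr ⟨by rw [h, mul_comm], hs⟩

lemma existsUnique_mod_div_pair {k : ℕ} (hk : 0 < k) (a b : ℕ) :
    ∃! x : ℕ × ℕ × ℕ × ℕ,
      x.1 < k ∧ x.2.1 < k ∧ a = x.1 + x.2.2.1 * k ∧ b = x.2.1 + x.2.2.2 * k := by
  refine ⟨(a % k, b % k, a / k, b / k),
    ⟨Nat.mod_lt _ hk, Nat.mod_lt _ hk, (Nat.mod_add_div' a k).symm,
      (Nat.mod_add_div' b k).symm⟩, ?_⟩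
  rintro ⟨i₀, j₀, i, j⟩ ⟨hi₀, hj₀, ha, hb⟩
  obtain ⟨hi, hi₀'⟩ := Nat.div_eq_and_mod_eq_of_eq_add_mul hi₀ ha
  obtain ⟨hj, hj₀'⟩ := Nat.div_eq_and_mod_eq_of_eq_add_mul hj₀ hb
  simp only [hi, hi₀', hj, hj₀']

lemma add_mul_lt_mul_add_iff_lt_add_ite {k q r s t : ℕ} (hr : r < k) (hs : s < 2 * k) :
    s + t * k < q * k + r ↔
      (t : ℤ) < q + (if s < r then 1 else if s < k + r then 0 else -1) := by
  zify at hr hs ⊢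
  split_ifs <;> constructor <;> intro h <;> by_contra! <;> nlinarith

theorem idap_triangle_decomposition_general (m k : ℕ) (hk : 0 < k)
    (n q r : ℕ) (hnqr : n = q * k + r) (hr : r < k)
    (u : ℕ → ℤ → ZMod m) (A D₁ D₂ : ℕ → ℕ → ZMod m)
    (hIDAP : ∀ i₀ < k, ∀ j₀ < k, ∀ (i : ℕ) (j : ℤ),
      u (i₀ + i * k) ((j₀ : ℤ) + j * k) =
        A i₀ j₀ + (i : ZMod m) * D₂ i₀ j₀ + (j : ZMod m) * D₁ i₀ j₀) :
    -- the triangle `{(a,b) : a + b < n}` is the disjoint union of the `k²` pieces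
    (∀ a b : ℕ, a + b < n →
      ∃! x : ℕ × ℕ × ℕ × ℕ,
        x.1 < k ∧ x.2.1 < k ∧ a = x.1 + x.2.2.1 * k ∧ b = x.2.1 + x.2.2.2 * k) ∧
    -- each piece is the arithmetic triangle `AT(A i₀ j₀, D₁ i₀ j₀, D₂ i₀ j₀, q + ε)`
    (∀ i₀ < k, ∀ j₀ < k, ∀ i j : ℕ,
      ((i₀ + i * k) + (j₀ + j * k) < n ↔
        (i : ℤ) + (j : ℤ) <
          (q : ℤ) + (if i₀ + j₀ < r then 1 else if i₀ + j₀ < k + r then 0 else -1)) ∧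
      ((i : ℤ) + (j : ℤ) <
          (q : ℤ) + (if i₀ + j₀ < r then 1 else if i₀ + j₀ < k + r then 0 else -1) →
        u (i₀ + i * k) ((j₀ : ℤ) + (j : ℤ) * k) =
          A i₀ j₀ + (i : ZMod m) * D₂ i₀ j₀ + (j : ZMod m) * D₁ i₀ j₀)) := by
  refine ⟨fun a b _ => existsUnique_mod_div_pair hk a b, fun i₀ hi₀ j₀ hj₀ i j => ⟨?_, ?_⟩⟩
  · have hsum : (i₀ + i * k) + (j₀ + j * k) = (i₀ + j₀) + (i + j) * k := by ring
    rw [hnqr, hsum, add_mul_lt_mul_add_iff_lt_add_ite hr (by omega), Nat.cast_add]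
  · intro _
    simpa only [Int.cast_natCast] using hIDAP i₀ hi₀ j₀ hj₀ i j

/-- Decomposition of a triangle of size `n = qk + r` appearing in a
`(k,k)`-interlaced doubly arithmetic progression into `k²` arithmetic
subtriangles of sizes `q + ε` with `ε ∈ {1,0,-1}`. -/
theorem idap_triangle_decomposition (m k : ℕ) (hm : 0 < m) (hk : 0 < k)
    (n q r : ℕ) (hn : 0 < n) (hnqr : n = q * k + r) (hr : r < k)
    (u : ℕ → ℤ → ZMod m) (A D₁ D₂ : ℕ → ℕ → ZMod m)
    (hIDAP : ∀ i₀ < k, ∀ j₀ < k, ∀ (i : ℕ) (j : ℤ),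
      u (i₀ + i * k) ((j₀ : ℤ) + j * k) =
        A i₀ j₀ + (i : ZMod m) * D₂ i₀ j₀ + (j : ZMod m) * D₁ i₀ j₀) :
    -- the triangle `{(a,b) : a + b < n}` is the disjoint union of the `k²` pieces
    (∀ a b : ℕ, a + b < n →
      ∃! x : ℕ × ℕ × ℕ × ℕ,
        x.1 < k ∧ x.2.1 < k ∧ a = x.1 + x.2.2.1 * k ∧ b = x.2.1 + x.2.2.2 * k) ∧
    -- each piece is the arithmetic triangle `AT(A i₀ j₀, D₁ i₀ j₀, D₂ i₀ j₀, q + ε)`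
    (∀ i₀ < k, ∀ j₀ < k, ∀ i j : ℕ,
      ((i₀ + i * k) + (j₀ + j * k) < n ↔
        (i : ℤ) + (j : ℤ) <
          (q : ℤ) + (if i₀ + j₀ < r then 1 else if i₀ + j₀ < k + r then 0 else -1)) ∧
      ((i : ℤ) + (j : ℤ) <
          (q : ℤ) + (if i₀ + j₀ < r then 1 else if i₀ + j₀ < k + r then 0 else -1) →
        u (i₀ + i * k) ((j₀ : ℤ) + (j : ℤ) * k) =
          A i₀ j₀ + (i : ZMod m) * D₂ i₀ j₀ + (j : ZMod m) * D₁ i₀ j₀)) :=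
  idap_triangle_decomposition_general m k hk n q r hnqr hr u A D₁ D₂ hIDAP
end
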